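/- arXiv:2507.16827 — 6 statements merged into one kernel-verified Lean document; each statement's English description precedes it below -/
import Mathlib

section
/- Let D₀ = M_d(ℂ), let t denote conjugate-transpose, let V be a free left D₀-module of rank m, and let ψ : V × V → D₀ be a non-degenerate (D₀, t)-skew-Hermitian form. Then there exists a D₀-basis v₁, …, v_m of V which is weakly unitary with respect to ψ, i.e., ψ(v_i, v_j) = 0 for all i ≠ j (and hence ψ(v_i, v_i) is invertible for each i). -/
open Matrix Finset

section Aux

variable {d : ℕ} {V : Type*} [AddCommGroup V]
  [Module (Matrix (Fin d) (Fin d) ℂ) V]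

/-- Change of basis by an invertible matrix over a (possibly noncommutative) ring. -/
theorem basis_of_invertible_matrix {R : Type*} [Ring R] {W : Type*} [AddCommGroup W] [Module R W]
    {m : ℕ} (b : Module.Basis (Fin m) R W) (Q Qi : Matrix (Fin m) (Fin m) R)
    (h1 : Q * Qi = 1) (h2 : Qi * Q = 1) :
    ∃ v : Module.Basis (Fin m) R W, ∀ i, v i = ∑ j, Q i j • b j := by
  have key : ∀ (A C : Matrix (Fin m) (Fin m) R), A * C = 1 → ∀ i,
      (b.constr ℕ fun k => ∑ j, C k j • b j) ((b.constr ℕ fun k => ∑ j, A k j • b j) (b i))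
        = b i := by
    intro A C h i
    rw [b.constr_basis, map_sum]
    have : ∀ j, (b.constr ℕ fun k => ∑ j, C k j • b j) (A i j • b j)
        = ∑ k, (A i j * C j k) • b k := by
      intro j
      rw [LinearMap.map_smul, b.constr_basis, Finset.smul_sum]
      simp [smul_smul]
    simp_rw [this]
    rw [Finset.sum_comm]
    have : ∀ k, ∑ j, (A i j * C j k) • b k = ((A * C) i k) • b k := by
      intro k
      rw [← Finset.sum_smul, Matrix.mul_apply]
    simp_rw [this, h, Matrix.one_apply, ite_smul, zero_smul]
    simp
  refine ⟨b.map (LinearEquiv.ofLinear (b.constr ℕ fun k => ∑ j, Q k j • b j)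
      (b.constr ℕ fun k => ∑ j, Qi k j • b j)
      (b.ext fun i => by simpa using key Qi Q h2 i)
      (b.ext fun i => by simpa using key Q Qi h1 i)), fun i => ?_⟩
  simp [Module.Basis.map_apply]

variable (ψ : V → V → Matrix (Fin d) (Fin d) ℂ)
  (haddl : ∀ x x' y, ψ (x + x') y = ψ x y + ψ x' y)
  (haddr : ∀ x y y', ψ x (y + y') = ψ x y + ψ x y')
  (hsmul : ∀ (a c : Matrix (Fin d) (Fin d) ℂ) (x y : V),
      ψ (a • x) (c • y) = a * ψ x y * cᴴ)

include haddl haddr hsmul in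
theorem psi_sum {ι κ : Type*} [Fintype ι] [Fintype κ]
    (a : ι → Matrix (Fin d) (Fin d) ℂ) (c : κ → Matrix (Fin d) (Fin d) ℂ)
    (x : ι → V) (y : κ → V) :
    ψ (∑ i, a i • x i) (∑ j, c j • y j)
      = ∑ i, ∑ j, a i * ψ (x i) (y j) * (c j)ᴴ := by
  have hpsum : ∀ (s : Finset ι) (z : ι → V) (w : V),
      ψ (∑ i ∈ s, z i) w = ∑ i ∈ s, ψ (z i) w := fun s z w =>
    map_sum (AddMonoidHom.mk' (fun u => ψ u w) (fun u u' => haddl u u' w)) z s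
  have hpsum' : ∀ (s : Finset κ) (z : κ → V) (w : V),
      ψ w (∑ i ∈ s, z i) = ∑ i ∈ s, ψ w (z i) := fun s z w =>
    map_sum (AddMonoidHom.mk' (fun u => ψ w u) (fun u u' => haddr w u u')) z s
  rw [hpsum]
  refine Finset.sum_congr rfl fun i _ => ?_
  rw [hpsum']
  refine Finset.sum_congr rfl fun j _ => ?_
  exact hsmul (a i) (c j) (x i) (y j)

end Aux

/-- Let `D₀ = M_d(ℂ)` with involution `t` = conjugate-transpose, `V` a free left
`D₀`-module of rank `m`, and `ψ` a non-degenerate `(D₀, t)`-skew-Hermitian form on `V`.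
Then `V` admits a weakly unitary `D₀`-basis: `ψ(v_i, v_j) = 0` for `i ≠ j`
(and hence `ψ(v_i, v_i)` is invertible for each `i`). -/
theorem stmt8 {d m : ℕ} {V : Type*} [AddCommGroup V]
    [Module (Matrix (Fin d) (Fin d) ℂ) V]
    (b : Module.Basis (Fin m) (Matrix (Fin d) (Fin d) ℂ) V)
    (ψ : V → V → Matrix (Fin d) (Fin d) ℂ)
    (haddl : ∀ x x' y, ψ (x + x') y = ψ x y + ψ x' y)
    (haddr : ∀ x y y', ψ x (y + y') = ψ x y + ψ x y')
    (hsmul : ∀ (a c : Matrix (Fin d) (Fin d) ℂ) (x y : V),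
      ψ (a • x) (c • y) = a * ψ x y * cᴴ)
    (hskew : ∀ x y, ψ y x = -(ψ x y)ᴴ)
    (hnd : ∀ x : V, x ≠ 0 → ∃ y, ψ x y ≠ 0) :
    ∃ v : Module.Basis (Fin m) (Matrix (Fin d) (Fin d) ℂ) V,
      (∀ i j, i ≠ j → ψ (v i) (v j) = 0) ∧ ∀ i, IsUnit (ψ (v i) (v i)) := by
  classical
  set E := Matrix.compAlgEquiv (Fin m) (Fin d) ℂ ℂ with hE
  set B : Matrix (Fin m) (Fin m) (Matrix (Fin d) (Fin d) ℂ) := Matrix.of fun i j => ψ (b i) (b j) with hB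
  set M : Matrix (Fin m × Fin d) (Fin m × Fin d) ℂ := E B with hMdef
  have hMapp : ∀ i p j q, M (i, p) (j, q) = ψ (b i) (b j) p q := fun i p j q => rfl
  -- M is invertible
  have hMunit : IsUnit M := by
    rw [Matrix.isUnit_iff_isUnit_det, isUnit_iff_ne_zero]
    intro hdet
    have hdetT : Mᵀ.det = 0 := by rwa [Matrix.det_transpose]
    obtain ⟨u, hu0, hu⟩ := (Matrix.exists_mulVec_eq_zero_iff).mpr hdetT
    have huM : u ᵥ* M = 0 := by rwa [← Matrix.mulVec_transpose]
    set a : Fin m → Matrix (Fin d) (Fin d) ℂ := fun i => Matrix.of fun _ p => u (i, p) with ha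
    have ha0 : a ≠ 0 := by
      intro h
      apply hu0
      funext ip
      have := congrFun h ip.1
      have := congrFun (congrFun this ip.2) ip.2
      simpa [ha] using this
    set x : V := b.equivFun.symm a with hx
    have hx0 : x ≠ 0 := fun h => ha0 (b.equivFun.symm.injective (by rw [hx] at h; rw [h, map_zero]))
    obtain ⟨y, hy⟩ := hnd x hx0
    apply hy
    have hxsum : x = ∑ i, a i • b i := b.equivFun_symm_apply a
    have hysum : y = ∑ j, b.equivFun y j • b j := (b.sum_equivFun y).symm
    rw [hxsum, hysum, psi_sum ψ haddl haddr hsmul]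
    rw [Finset.sum_comm]
    have inner0 : ∀ j, ∑ i, a i * ψ (b i) (b j) = 0 := by
      intro j
      ext r q
      have h0 := congrFun huM (j, q)
      simp only [Matrix.vecMul, dotProduct, Pi.zero_apply] at h0
      rw [Fintype.sum_prod_type] at h0
      simp only [Matrix.sum_apply, Matrix.mul_apply, Matrix.zero_apply]
      exact h0
    calc ∑ j, ∑ i, a i * ψ (b i) (b j) * (b.equivFun y j)ᴴ
        = ∑ j, (∑ i, a i * ψ (b i) (b j)) * (b.equivFun y j)ᴴ := by
          refine Finset.sum_congr rfl fun j _ => ?_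
          rw [Finset.sum_mul]
      _ = 0 := by simp [inner0]
  -- M is skew-Hermitian; H = I • M is Hermitian
  set H : Matrix (Fin m × Fin d) (Fin m × Fin d) ℂ := Complex.I • M with hHdef
  have hMskew : Mᴴ = -M := by
    ext ⟨i, p⟩ ⟨j, q⟩
    simp only [Matrix.conjTranspose_apply, Matrix.neg_apply]
    rw [hMapp, hMapp, hskew (b i) (b j)]
    simp [Matrix.conjTranspose_apply]
  have hH : H.IsHermitian := by
    rw [Matrix.IsHermitian, hHdef, Matrix.conjTranspose_smul, hMskew]
    simp [smul_smul]
  have hMeq : M = (-Complex.I) • H := by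
    rw [hHdef, smul_smul]
    norm_num [Complex.I_mul_I]
  -- eigenvalues are nonzero
  have hdetH : H.det ≠ 0 := by
    rw [hHdef, Matrix.det_smul]
    refine mul_ne_zero (pow_ne_zero _ Complex.I_ne_zero) ?_
    rw [← isUnit_iff_ne_zero, ← Matrix.isUnit_iff_isUnit_det]
    exact hMunit
  have hEigNe : ∀ k, (hH.eigenvalues k : ℂ) ≠ 0 := by
    intro k
    have := hdetH
    rw [hH.det_eq_prod_eigenvalues] at this
    intro h
    exact this (Finset.prod_eq_zero (Finset.mem_univ k) h)
  set u : Matrix (Fin m × Fin d) (Fin m × Fin d) ℂ := ↑(hH.eigenvectorUnitary) with hu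
  have hsu : star u * u = 1 := Unitary.coe_star_mul_self hH.eigenvectorUnitary
  have hus : u * star u = 1 := Unitary.coe_mul_star_self hH.eigenvectorUnitary
  set dfun : Fin m × Fin d → ℂ := fun k => (-Complex.I) * (hH.eigenvalues k : ℂ) with hdfun
  have hPMP : star u * M * u = Matrix.diagonal dfun := by
    have hspec := hH.spectral_theorem
    calc star u * M * u = star u * ((-Complex.I) • H) * u := by rw [← hMeq]
      _ = (-Complex.I) • (star u * H * u) := by
          rw [Matrix.mul_smul, Matrix.smul_mul]
      _ = (-Complex.I) • (star u * (u * Matrix.diagonal (RCLike.ofReal ∘ hH.eigenvalues) * star u) * u) := by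
          rw [Unitary.conjStarAlgAut_apply] at hspec
          exact congrArg (fun X => (-Complex.I) • (star u * X * u)) hspec
      _ = (-Complex.I) • ((star u * u) * Matrix.diagonal (RCLike.ofReal ∘ hH.eigenvalues) * (star u * u)) := by
          simp only [Matrix.mul_assoc]
      _ = (-Complex.I) • Matrix.diagonal (RCLike.ofReal ∘ hH.eigenvalues) := by
          rw [hsu, one_mul, mul_one]
      _ = Matrix.diagonal dfun := by
          ext k l
          by_cases h : k = l <;> simp [Matrix.diagonal_apply, h, hdfun]
  -- change of basis
  set Q : Matrix (Fin m) (Fin m) (Matrix (Fin d) (Fin d) ℂ) := E.symm (star u) with hQ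
  set Qi : Matrix (Fin m) (Fin m) (Matrix (Fin d) (Fin d) ℂ) := E.symm u with hQi
  have hQQi : Q * Qi = 1 := by
    rw [hQ, hQi, ← _root_.map_mul E.symm, hsu, _root_.map_one E.symm]
  have hQiQ : Qi * Q = 1 := by
    rw [hQ, hQi, ← _root_.map_mul E.symm, hus, _root_.map_one E.symm]
  obtain ⟨v, hv⟩ := basis_of_invertible_matrix b Q Qi hQQi hQiQ
  set Qstar : Matrix (Fin m) (Fin m) (Matrix (Fin d) (Fin d) ℂ) := Matrix.of fun l j => (Q j l)ᴴ with hQstar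
  have hEQstar : E Qstar = u := by
    ext ⟨l, p⟩ ⟨j, q⟩
    have h1 : E Qstar (l, p) (j, q) = Qstar l j p q := rfl
    have h2 : E Q (j, q) (l, p) = Q j l q p := rfl
    rw [h1]
    have : Qstar l j p q = star (Q j l q p) := by simp [hQstar, Matrix.conjTranspose_apply]
    rw [this, ← h2, hQ, E.apply_symm_apply]
    simp [Matrix.conjTranspose_apply]
  have hkey : Q * B * Qstar = E.symm (Matrix.diagonal dfun) := by
    apply E.injective
    rw [_root_.map_mul, _root_.map_mul, hEQstar, hQ, E.apply_symm_apply, E.apply_symm_apply, ← hMdef, hPMP]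
  -- compute ψ (v i) (v j)
  have hpsi : ∀ i j, ψ (v i) (v j) = (Q * B * Qstar) i j := by
    intro i j
    rw [hv i, hv j, psi_sum ψ haddl haddr hsmul, Finset.sum_comm, Matrix.mul_apply]
    refine Finset.sum_congr rfl fun l _ => ?_
    rw [Matrix.mul_apply, Finset.sum_mul]
    exact Finset.sum_congr rfl fun k _ => rfl
  have hpsiD : ∀ i j p q, ψ (v i) (v j) p q = Matrix.diagonal dfun (i, p) (j, q) := by
    intro i j p q
    rw [hpsi i j, hkey]
    rfl
  refine ⟨v, fun i j hij => ?_, fun i => ?_⟩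
  · ext p q
    rw [hpsiD]
    exact Matrix.diagonal_apply_ne _ (by simp [hij])
  · have hdiag : ψ (v i) (v i) = Matrix.diagonal fun p => dfun (i, p) := by
      ext p q
      rw [hpsiD]
      by_cases h : p = q
      · subst h; simp [Matrix.diagonal_apply_eq]
      · rw [Matrix.diagonal_apply_ne _ (by simp [h]), Matrix.diagonal_apply_ne _ h]
    rw [hdiag, Matrix.isUnit_iff_isUnit_det, Matrix.det_diagonal, isUnit_iff_ne_zero]
    refine Finset.prod_ne_zero_iff.mpr fun p _ => ?_
    exact mul_ne_zero (neg_ne_zero.mpr Complex.I_ne_zero) (hEigNe (i, p))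
end

section
/- Let D₀ = M_d(ℂ), V a free left D₀-module, and ψ : V × V → D₀ a non-degenerate skew-Hermitian form with respect to conjugate-transpose. Then there exists z ∈ V such that ψ(z, z) ∈ GL_d(ℂ). -/
open Matrix

/-- Let `D₀ = M_d(ℂ)`, `V` a (nonzero) free left `D₀`-module, and `ψ` a
non-degenerate skew-Hermitian form on `V` with respect to conjugate-transpose.
Then there exists `z ∈ V` with `ψ(z, z) ∈ GL_d(ℂ)`. -/
theorem stmt9 {d m : ℕ} (hd : 0 < d) (hm : 0 < m) {V : Type*} [AddCommGroup V]
    [Module (Matrix (Fin d) (Fin d) ℂ) V]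
    (b : Module.Basis (Fin m) (Matrix (Fin d) (Fin d) ℂ) V)
    (ψ : V → V → Matrix (Fin d) (Fin d) ℂ)
    (haddl : ∀ x x' y, ψ (x + x') y = ψ x y + ψ x' y)
    (haddr : ∀ x y y', ψ x (y + y') = ψ x y + ψ x y')
    (hsmul : ∀ (a c : Matrix (Fin d) (Fin d) ℂ) (x y : V),
      ψ (a • x) (c • y) = a * ψ x y * cᴴ)
    (hskew : ∀ x y, ψ y x = -(ψ x y)ᴴ)
    (hnd : ∀ x : V, x ≠ 0 → ∃ y, ψ x y ≠ 0) :
    ∃ z : V, IsUnit (ψ z z) := by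
  classical
  -- biadditivity in finite sums
  have hsuml : ∀ (y : V) (f : Fin m → V), ψ (∑ i, f i) y = ∑ i, ψ (f i) y := fun y f =>
    map_sum (AddMonoidHom.mk' (fun x => ψ x y) (fun a c => haddl a c y)) f Finset.univ
  have hsumr : ∀ (x : V) (f : Fin m → V), ψ x (∑ i, f i) = ∑ i, ψ x (f i) := fun x f =>
    map_sum (AddMonoidHom.mk' (fun y => ψ x y) (fun a c => haddr x a c)) f Finset.univ
  -- the Gram matrix
  let G : Matrix (Fin m × Fin d) (Fin m × Fin d) ℂ := Matrix.of fun k l => ψ (b k.1) (b l.1) k.2 l.2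
  let mk : (Fin m → Matrix (Fin d) (Fin d) ℂ) → Matrix (Fin d) (Fin m × Fin d) ℂ :=
    fun a => Matrix.of fun p k => a k.1 p k.2
  have hkey : ∀ a c : Fin m → Matrix (Fin d) (Fin d) ℂ,
      ψ (∑ i, a i • b i) (∑ j, c j • b j) = mk a * G * (mk c)ᴴ := by
    intro a c
    ext p q
    rw [hsuml]
    simp only [hsumr, hsmul]
    rw [Matrix.sum_apply]
    simp only [Matrix.sum_apply]
    simp only [Matrix.mul_apply, conjTranspose_apply, Fintype.sum_prod_type, mk, G,
      Matrix.of_apply, Finset.sum_mul, Finset.mul_sum]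
    rw [Finset.sum_comm]
    exact Finset.sum_congr rfl fun j _ => Finset.sum_comm
  -- G is invertible
  have hGdet : G.det ≠ 0 := by
    intro h0
    have h0' : Gᵀ.det = 0 := by rwa [det_transpose]
    obtain ⟨v, hv, hv0⟩ := (Matrix.exists_mulVec_eq_zero_iff).mpr h0'
    have hvec : ∀ l, ∑ k, v k * G k l = 0 := by
      intro l
      have := congrFun hv0 l
      simpa [Matrix.mulVec, dotProduct, Matrix.transpose_apply, mul_comm] using this
    set p0 : Fin d := ⟨0, hd⟩ with hp0
    set a : Fin m → Matrix (Fin d) (Fin d) ℂ :=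
      fun i => Matrix.of fun p q => if p = p0 then v (i, q) else 0 with ha
    have hx0 : (∑ i, a i • b i) ≠ 0 := by
      intro hx
      have hli := Fintype.linearIndependent_iff.mp b.linearIndependent a hx
      obtain ⟨k, hk⟩ := Function.ne_iff.mp hv
      have := congrFun (congrFun (hli k.1) p0) k.2
      simp [ha] at this
      exact hk (by simpa using this)
    obtain ⟨y, hy⟩ := hnd _ hx0
    apply hy
    have hyrep : y = ∑ j, b.repr y j • b j := (b.sum_repr y).symm
    rw [hyrep, hkey]
    have hz : mk a * G = 0 := by
      ext p l
      simp only [Matrix.mul_apply, mk, ha, Matrix.of_apply, Matrix.zero_apply]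
      by_cases hp : p = p0
      · simp only [hp, if_true]
        simpa using hvec l
      · simp [hp]
    rw [hz, Matrix.zero_mul]
  have hGskew : Gᴴ = -G := by
    ext k l
    have h := hskew (b k.1) (b l.1)
    have := congrFun (congrFun h l.2) k.2
    simp only [conjTranspose_apply, G, Matrix.of_apply, Matrix.neg_apply]
    rw [this]
    simp [conjTranspose_apply]
  set H : Matrix (Fin m × Fin d) (Fin m × Fin d) ℂ := Complex.I • G with hHdef
  have hH : H.IsHermitian := by
    show Hᴴ = H
    rw [hHdef, conjTranspose_smul, hGskew]
    simp [Complex.conj_I, smul_smul]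
  have hdetH : H.det ≠ 0 := by
    rw [hHdef, Matrix.det_smul]
    exact mul_ne_zero (pow_ne_zero _ Complex.I_ne_zero) hGdet
  have heig : ∀ k : Fin m × Fin d, hH.eigenvalues k ≠ 0 := by
    intro k hk
    apply hdetH
    rw [hH.det_eq_prod_eigenvalues]
    exact Finset.prod_eq_zero (Finset.mem_univ k) (by rw [hk]; simp)
  set i0 : Fin m := ⟨0, hm⟩ with hi0
  set U : Matrix (Fin m × Fin d) (Fin m × Fin d) ℂ := (hH.eigenvectorUnitary : Matrix (Fin m × Fin d) (Fin m × Fin d) ℂ) with hU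
  set D : Matrix (Fin m × Fin d) (Fin m × Fin d) ℂ := Matrix.diagonal (RCLike.ofReal ∘ hH.eigenvalues) with hD
  have hspec : H = U * D * star U := hH.spectral_theorem
  have hUU : star U * U = 1 := (Matrix.mem_unitaryGroup_iff').mp (hH.eigenvectorUnitary).2
  let S : Matrix (Fin d) (Fin m × Fin d) ℂ := Matrix.of fun p k => if k = (i0, p) then 1 else 0
  have hSDS : S * D * Sᴴ = Matrix.diagonal (fun p => (hH.eigenvalues (i0, p) : ℂ)) := by
    ext p q
    rw [Matrix.mul_apply]
    simp only [Matrix.mul_diagonal, conjTranspose_apply, S, Matrix.of_apply, hD,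
      Function.comp_apply]
    rw [Finset.sum_eq_single ((i0, p) : Fin m × Fin d)]
    · by_cases hpq : p = q
      · subst hpq; simp
      · have hne : ((i0, p) : Fin m × Fin d) ≠ (i0, q) := by simp [Prod.ext_iff, hpq]
        simp [hne, Matrix.diagonal_apply_ne _ hpq]
    · intro c _ hc; simp [hc]
    · simp
  set A : Matrix (Fin d) (Fin m × Fin d) ℂ := S * star U with hA
  have hAH : A * H * Aᴴ = Matrix.diagonal (fun p => (hH.eigenvalues (i0, p) : ℂ)) := by
    have hAconj : Aᴴ = U * Sᴴ := by
      rw [hA, conjTranspose_mul, Matrix.star_eq_conjTranspose, conjTranspose_conjTranspose]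
    rw [hA, hAconj, ← hSDS]
    conv_lhs => rw [hspec]
    calc S * star U * (U * D * star U) * (U * Sᴴ)
        = S * ((star U * U) * (D * ((star U * U) * Sᴴ))) := by
          simp only [Matrix.mul_assoc]
      _ = S * D * Sᴴ := by rw [hUU]; simp only [Matrix.one_mul, Matrix.mul_assoc]
  -- the witness
  let av : Fin m → Matrix (Fin d) (Fin d) ℂ := fun i => Matrix.of fun p q => A p (i, q)
  refine ⟨∑ i, av i • b i, ?_⟩
  have hmkA : mk av = A := by ext p k; cases k; rfl
  have hGH : G = (-Complex.I) • H := by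
    rw [hHdef, smul_smul]
    simp [Complex.I_mul_I]
  rw [hkey, hmkA, hGH, Matrix.mul_smul, Matrix.smul_mul, hAH]
  apply (Matrix.isUnit_iff_isUnit_det _).mpr
  rw [Matrix.det_smul, Matrix.det_diagonal]
  apply IsUnit.mul
  · exact (isUnit_iff_ne_zero).mpr (pow_ne_zero _ (neg_ne_zero.mpr Complex.I_ne_zero))
  · rw [isUnit_iff_ne_zero]
    apply Finset.prod_ne_zero_iff.mpr
    intro p _
    exact_mod_cast fun h => heig (i0, p) (by exact_mod_cast h)
end

section
/- Let D₀ = ℍ, let t be quaternion conjugation, let V be a free left ℍ-module of rank m, and ψ : V × V → ℍ a non-degenerate (ℍ, t)-skew-Hermitian form. Then there exists an ℍ-basis v₁, …, v_m of V such that ψ(v_i, v_j) = 0 for i ≠ j and ψ(v_i, v_i) = i for all i (a unitary basis). -/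
local notation "ℍ" => Quaternion ℝ
noncomputable def qi : ℍ := ⟨0,1,0,0⟩
@[simp] lemma qi_re : qi.re = 0 := rfl
@[simp] lemma qi_imI : qi.imI = 1 := rfl
@[simp] lemma qi_imJ : qi.imJ = 0 := rfl
@[simp] lemma qi_imK : qi.imK = 0 := rfl
noncomputable def qj : ℍ := ⟨0,0,1,0⟩
@[simp] lemma qj_re : qj.re = 0 := rfl
@[simp] lemma qj_imI : qj.imI = 0 := rfl
@[simp] lemma qj_imJ : qj.imJ = 1 := rfl
@[simp] lemma qj_imK : qj.imK = 0 := rfl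
attribute [local simp] Quaternion.re_one Quaternion.imI_one Quaternion.imJ_one Quaternion.imK_one Quaternion.re_zero Quaternion.imI_zero Quaternion.imJ_zero Quaternion.imK_zero

lemma qi_mul_qi : qi * qi = -1 := by ext <;> simp
lemma star_qi : star qi = -qi := by ext <;> simp
lemma qi_ne_zero : qi ≠ 0 := by simp [Quaternion.ext_iff]

lemma pure_sq (p : ℍ) (hp : star p = -p) : p * p = -((Quaternion.normSq p : ℝ) : ℍ) := by
  have h2 : p * p = -(p * star p) := by rw [hp, mul_neg, neg_neg]
  rw [h2, Quaternion.self_mul_star]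

lemma conj_pure (p : ℍ) (hp : star p = -p) (h0 : p ≠ 0) :
    ∃ q : ℍ, q * p * star q = qi := by
  set N : ℝ := Quaternion.normSq p with hN
  have hNpos : 0 < N := by
    have := Quaternion.normSq_ne_zero.2 h0
    have h1 : 0 ≤ N := Quaternion.normSq_nonneg
    exact lt_of_le_of_ne h1 (Ne.symm (by simpa [hN] using this))
  set s : ℝ := Real.sqrt N with hs
  have hspos : 0 < s := Real.sqrt_pos.2 hNpos
  have hss : ((s:ℝ):ℍ) * ((s:ℝ):ℍ) = ((N:ℝ):ℍ) := by
    rw [← Quaternion.coe_mul, Real.mul_self_sqrt hNpos.le]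
  have hps : p * p = -((N : ℝ) : ℍ) := pure_sq p hp
  obtain ⟨q₀, hq₀ne, hkey⟩ : ∃ q₀ : ℍ, q₀ ≠ 0 ∧ q₀ * p = ((s : ℝ) : ℍ) * (qi * q₀) := by
    by_cases hcase : ((s : ℝ) : ℍ) - qi * p = 0
    · have h1 : qi * p = ((s:ℝ):ℍ) := by
        rw [sub_eq_zero] at hcase; exact hcase.symm
      have hp' : p = -(qi * ((s:ℝ):ℍ)) := by
        have h2 := congrArg (fun x => qi * x) h1
        simp only [← mul_assoc, qi_mul_qi, neg_one_mul] at h2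
        rw [← h2, neg_neg]
      refine ⟨qj, by simp [Quaternion.ext_iff], ?_⟩
      rw [hp']
      ext <;> simp
    · refine ⟨((s : ℝ) : ℍ) - qi * p, hcase, ?_⟩
      have lhs : (((s : ℝ) : ℍ) - qi * p) * p = ((s:ℝ):ℍ) * p + ((N:ℝ):ℍ) * qi := by
        rw [sub_mul, mul_assoc, hps, mul_neg, sub_neg_eq_add,
          ← (Quaternion.coe_commute N qi).eq]
      have rhs : ((s:ℝ):ℍ) * (qi * (((s : ℝ) : ℍ) - qi * p))
          = ((s:ℝ):ℍ) * p + ((N:ℝ):ℍ) * qi := by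
        rw [mul_sub, mul_sub, ← mul_assoc qi qi p, qi_mul_qi, neg_one_mul, mul_neg,
          sub_neg_eq_add, ← (Quaternion.coe_commute s qi).eq, ← mul_assoc, hss]
        rw [add_comm]
      rw [lhs, rhs]
  set nq : ℝ := Quaternion.normSq q₀ with hnq
  have hnqpos : 0 < nq := by
    have := Quaternion.normSq_ne_zero.2 hq₀ne
    exact lt_of_le_of_ne Quaternion.normSq_nonneg (Ne.symm (by simpa [hnq] using this))
  set T : ℝ := s * nq with hT
  have hTpos : 0 < T := mul_pos hspos hnqpos
  set c : ℝ := (Real.sqrt T)⁻¹ with hc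
  refine ⟨((c:ℝ):ℍ) * q₀, ?_⟩
  have hstar : star (((c:ℝ):ℍ) * q₀) = star q₀ * ((c:ℝ):ℍ) := by
    rw [star_mul, Quaternion.star_coe]
  rw [hstar]
  have hmid : q₀ * p * star q₀ = ((T:ℝ):ℍ) * qi := by
    rw [hkey, mul_assoc, mul_assoc, Quaternion.self_mul_star,
      ← (Quaternion.coe_commute nq qi).eq, ← mul_assoc, ← Quaternion.coe_mul]
  calc ((c:ℝ):ℍ) * q₀ * p * (star q₀ * ((c:ℝ):ℍ))
      = ((c:ℝ):ℍ) * (q₀ * p * star q₀) * ((c:ℝ):ℍ) := by noncomm_ring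
    _ = ((c:ℝ):ℍ) * (((T:ℝ):ℍ) * qi) * ((c:ℝ):ℍ) := by rw [hmid]
    _ = ((c * T * c : ℝ):ℍ) * qi := by
        rw [← mul_assoc, ← Quaternion.coe_mul, mul_assoc, ← (Quaternion.coe_commute c qi).eq,
          ← mul_assoc, ← Quaternion.coe_mul]
    _ = qi := by
        have : c * T * c = 1 := by
          rw [hc, mul_comm ((Real.sqrt T)⁻¹) T, mul_assoc, ← mul_inv,
            Real.mul_self_sqrt hTpos.le]
          exact mul_inv_cancel₀ hTpos.ne'
        rw [this]; simp

universe u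

theorem aux (m : ℕ) : ∀ {V : Type u} [AddCommGroup V] [Module ℍ V]
    (_ : Module.Basis (Fin m) ℍ V) (ψ : V → V → ℍ),
    (∀ x x' y, ψ (x + x') y = ψ x y + ψ x' y) →
    (∀ x y y', ψ x (y + y') = ψ x y + ψ x y') →
    (∀ (a c : ℍ) (x y : V), ψ (a • x) (c • y) = a * ψ x y * star c) →
    (∀ x y, ψ y x = - star (ψ x y)) →
    (∀ x : V, x ≠ 0 → ∃ y, ψ x y ≠ 0) →
    ∃ v : Module.Basis (Fin m) ℍ V,
      (∀ i j, i ≠ j → ψ (v i) (v j) = 0) ∧ ∀ i, ψ (v i) (v i) = qi := by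
  induction m with
  | zero =>
    intro V _ _ b ψ _ _ _ _ _
    exact ⟨b, fun i => i.elim0, fun i => i.elim0⟩
  | succ n ih =>
    intro V _ _ b ψ haddl haddr hsmul hskew hnd
    -- basic facts
    have hz_r : ∀ x : V, ψ x 0 = 0 := by
      intro x
      have h := haddr x 0 0
      rw [add_zero] at h
      exact left_eq_add.1 h
    have hz_l : ∀ y : V, ψ 0 y = 0 := by
      intro y
      have h := haddl 0 0 y
      rw [add_zero] at h
      exact left_eq_add.1 h
    have hsmul_l : ∀ (a : ℍ) (x y : V), ψ (a • x) y = a * ψ x y := by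
      intro a x y
      have h := hsmul a 1 x y
      simpa using h
    have hsmul_r : ∀ (c : ℍ) (x y : V), ψ x (c • y) = ψ x y * star c := by
      intro c x y
      have h := hsmul 1 c x y
      simpa using h
    have hsub_r : ∀ x y y' : V, ψ x (y - y') = ψ x y - ψ x y' := by
      intro x y y'
      have h := haddr x (y - y') y'
      rw [sub_add_cancel] at h
      exact eq_sub_of_add_eq h.symm
    -- exists anisotropic vector
    obtain ⟨x, hx⟩ : ∃ x : V, ψ x x ≠ 0 := by
      by_contra hcon
      push_neg at hcon
      have hsym : ∀ x y : V, star (ψ x y) = ψ x y := by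
        intro x y
        have h0 : ψ x y + ψ y x = 0 := by
          have h := hcon (x + y)
          rw [haddl, haddr, haddr, hcon x, hcon y, zero_add, add_zero] at h
          exact h
        have h2 : ψ y x = -ψ x y := eq_neg_of_add_eq_zero_right h0
        rw [hskew x y] at h2
        exact neg_injective h2
      obtain ⟨y, hy⟩ := hnd (b 0) (b.ne_zero 0)
      have hp1 : star (ψ (b 0) y) = ψ (b 0) y := hsym _ _
      have hpre : ψ (b 0) y = (((ψ (b 0) y).re : ℝ) : ℍ) := Quaternion.star_eq_self.1 hp1
      have hq := hsym (b 0) (qi • y)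
      rw [hsmul_r, star_mul, star_star, star_qi, hp1] at hq
      -- hq : qi * ψ (b 0) y = ψ (b 0) y * -qi
      have h3 := congrArg QuaternionAlgebra.imI hq
      rw [hpre] at h3
      simp at h3
      have hre : (ψ (b 0) y).re = 0 := by linarith
      rw [hre] at hpre
      exact hy (by rw [hpre]; simp)
    -- normalize to get v with ψ v v = qi
    have hpure : star (ψ x x) = -(ψ x x) := by
      have h := hskew x x
      conv_lhs => rw [h]
      rw [star_neg, star_star]
    obtain ⟨q, hq⟩ := conj_pure (ψ x x) hpure hx
    have hqx : q ≠ 0 := by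
      intro h
      rw [h] at hq
      simp at hq
      exact qi_ne_zero hq.symm
    set v : V := q • x with hvdef
    have hv : ψ v v = qi := by rw [hvdef, hsmul]; exact hq
    have hvne : v ≠ 0 := by
      intro h
      rw [h, hz_l] at hv
      exact qi_ne_zero hv.symm
    -- the orthogonal complement
    set W : Submodule ℍ V :=
      { carrier := {y | ψ v y = 0}
        add_mem' := by
          intro y z hy hz
          simp only [Set.mem_setOf_eq] at *
          rw [haddr, hy, hz, add_zero]
        zero_mem' := hz_r v
        smul_mem' := by
          intro c y hy
          simp only [Set.mem_setOf_eq] at *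
          rw [hsmul_r, hy, zero_mul] } with hWdef
    have hmemW : ∀ y : V, y ∈ W ↔ ψ v y = 0 := fun y => Iff.rfl
    have hqiinv : qi * -qi = 1 := by rw [mul_neg, qi_mul_qi, neg_neg]
    have hproj : ∀ z : V, z - (star (ψ v z) * qi) • v ∈ W := by
      intro z
      rw [hmemW]
      rw [hsub_r, hsmul_r, hv, star_mul, star_qi, star_star, ← mul_assoc, hqiinv,
        one_mul, sub_self]
    have hsp : ∀ z : V, ∃ c : ℍ, z + c • v ∈ W := by
      intro z
      exact ⟨-(star (ψ v z) * qi), by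
        rw [neg_smul, ← sub_eq_add_neg]; exact hproj z⟩
    have hli : ∀ (c : ℍ), ∀ y ∈ W, c • v + y = 0 → c = 0 := by
      intro c y hy hcy
      have h := congrArg (ψ v) hcy
      rw [haddr, hsmul_r, hv, (hmemW y).1 hy, hz_r, add_zero] at h
      have hsc : star c = 0 := by
        rcases mul_eq_zero.1 h with h' | h'
        · exact absurd h' qi_ne_zero
        · exact h'
      simpa using congrArg star hsc
    -- dimension count
    haveI hfd : FiniteDimensional ℍ V := Module.Finite.of_basis b
    have hrank : Module.finrank ℍ V = n + 1 := by
      rw [Module.finrank_eq_card_basis b, Fintype.card_fin]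
    have hsup : (Submodule.span ℍ {v}) ⊔ W = ⊤ := by
      rw [eq_top_iff]
      intro z _
      obtain ⟨c, hc⟩ := hsp z
      have hz : z = -(c • v) + (z + c • v) := by abel
      rw [hz]
      exact Submodule.add_mem_sup
        (Submodule.neg_mem _ (Submodule.smul_mem _ c (Submodule.mem_span_singleton_self v))) hc
    have hinf : (Submodule.span ℍ {v}) ⊓ W = ⊥ := by
      rw [eq_bot_iff]
      intro z hz
      obtain ⟨hz1, hz2⟩ := Submodule.mem_inf.1 hz
      obtain ⟨c, rfl⟩ := Submodule.mem_span_singleton.1 hz1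
      have h : ψ v (c • v) = 0 := (hmemW _).1 hz2
      rw [hsmul_r, hv] at h
      have hsc : star c = 0 := by
        rcases mul_eq_zero.1 h with h' | h'
        · exact absurd h' qi_ne_zero
        · exact h'
      have : c = 0 := by simpa using congrArg star hsc
      simp [this]
    have hWrank : Module.finrank ℍ W = n := by
      have h2 := Submodule.finrank_sup_add_finrank_inf_eq (Submodule.span ℍ {v}) W
      rw [hsup, hinf, finrank_span_singleton hvne, finrank_top, hrank, finrank_bot] at h2
      omega
    let bW : Module.Basis (Fin n) ℍ W := Module.finBasisOfFinrankEq ℍ W hWrank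
    -- apply induction hypothesis to W
    obtain ⟨w, hw1, hw2⟩ := ih bW (fun y z : W => ψ (y : V) (z : V))
      (by intro x x' y; push_cast; rw [haddl])
      (by intro x y y'; push_cast; rw [haddr])
      (by intro a c x y; push_cast; rw [hsmul])
      (by intro x y; exact hskew _ _)
      (by
        intro y hy
        have hyV : (y : V) ≠ 0 := fun h => hy (Subtype.ext h)
        obtain ⟨z, hz⟩ := hnd (y : V) hyV
        obtain ⟨c, hc⟩ := hsp z
        refine ⟨⟨z + c • v, hc⟩, ?_⟩
        have hyv : ψ (y : V) v = 0 := by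
          rw [hskew v (y : V), (hmemW (y : V)).1 y.2, star_zero, neg_zero]
        show ψ (y : V) (z + c • v) ≠ 0
        rw [haddr, hsmul_r, hyv, zero_mul, add_zero]
        exact hz)
    -- assemble the basis
    refine ⟨Module.Basis.mkFinCons v w hli hsp, ?_, ?_⟩
    · intro i j hij
      simp only [Module.Basis.coe_mkFinCons]
      rcases Fin.eq_zero_or_eq_succ i with rfl | ⟨i', rfl⟩ <;>
        rcases Fin.eq_zero_or_eq_succ j with rfl | ⟨j', rfl⟩
      · exact absurd rfl hij
      · simp only [Fin.cons_zero, Fin.cons_succ, Function.comp_apply]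
        exact (hmemW _).1 (w j').2
      · simp only [Fin.cons_zero, Fin.cons_succ, Function.comp_apply]
        rw [hskew v ((w i' : V)), (hmemW _).1 (w i').2, star_zero, neg_zero]
      · simp only [Fin.cons_succ, Function.comp_apply]
        exact hw1 i' j' (fun h => hij (by rw [h]))
    · intro i
      simp only [Module.Basis.coe_mkFinCons]
      rcases Fin.eq_zero_or_eq_succ i with rfl | ⟨i', rfl⟩
      · simpa using hv
      · simp only [Fin.cons_succ, Function.comp_apply]
        exact hw2 i'



/-- Let `D₀ = ℍ` with involution `t` = quaternion conjugation, `V` a free left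
`ℍ`-module of rank `m`, and `ψ` a non-degenerate `(ℍ, t)`-skew-Hermitian form.
Then `V` admits a unitary `ℍ`-basis: `ψ(v_i, v_j) = 0` for `i ≠ j` and
`ψ(v_i, v_i) = i` for all `i`. -/
theorem stmt10 {m : ℕ} {V : Type*} [AddCommGroup V] [Module (Quaternion ℝ) V]
    (b : Module.Basis (Fin m) (Quaternion ℝ) V)
    (ψ : V → V → Quaternion ℝ)
    (haddl : ∀ x x' y, ψ (x + x') y = ψ x y + ψ x' y)
    (haddr : ∀ x y y', ψ x (y + y') = ψ x y + ψ x y')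
    (hsmul : ∀ (a c : Quaternion ℝ) (x y : V),
      ψ (a • x) (c • y) = a * ψ x y * star c)
    (hskew : ∀ x y, ψ y x = - star (ψ x y))
    (hnd : ∀ x : V, x ≠ 0 → ∃ y, ψ x y ≠ 0) :
    ∃ v : Module.Basis (Fin m) (Quaternion ℝ) V,
      (∀ i j, i ≠ j → ψ (v i) (v j) = 0) ∧
      ∀ i, ψ (v i) (v i) = (⟨0, 1, 0, 0⟩ : Quaternion ℝ) := by
  exact aux m b ψ haddl haddr hsmul hskew hnd
end

section
/- Let F₀ be a number field with maximal order O_{F₀}, let O be an order in F₀, and let 𝔠 = { α ∈ O_{F₀} : α O_{F₀} ⊂ O } be the conductor of O. Then Nm(𝔠) ≤ [O_{F₀} : O]². -/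
open NumberField

section CharDuality

lemma dual_equiv (Q : Type*) [AddCommGroup Q] [Finite Q] :
    Nonempty ((Multiplicative Q →* ℂˣ) ≃ Q) := by
  have : NeZero (Monoid.exponent (Multiplicative Q)) := ⟨Monoid.exponent_ne_zero_of_finite⟩
  obtain ⟨e⟩ := CommGroup.monoidHom_mulEquiv_of_hasEnoughRootsOfUnity (Multiplicative Q) ℂ
  exact ⟨e.toEquiv.trans Multiplicative.toAdd⟩

lemma dual_card_eq (Q : Type*) [AddCommGroup Q] [Finite Q] :
    Nat.card (Multiplicative Q →* ℂˣ) = Nat.card Q := by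
  obtain ⟨e⟩ := dual_equiv Q
  exact Nat.card_congr e

lemma dual_finite (Q : Type*) [AddCommGroup Q] [Finite Q] :
    Finite (Multiplicative Q →* ℂˣ) := by
  obtain ⟨e⟩ := dual_equiv Q
  exact Finite.of_equiv _ e.symm

lemma exists_char_ne_one {T : Type*} [AddCommGroup T] [Finite T] {σ : T} (h : σ ≠ 0) :
    ∃ χ : Multiplicative T →* ℂˣ, χ (Multiplicative.ofAdd σ) ≠ 1 := by
  have : NeZero (Monoid.exponent (Multiplicative T)) := ⟨Monoid.exponent_ne_zero_of_finite⟩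
  refine CommGroup.exists_apply_ne_one_of_hasEnoughRootsOfUnity (Multiplicative T) ℂ ?_
  simpa using h

end CharDuality

section Perp

variable {T : Type*} [CommRing T] [Finite T] (χ : Multiplicative T →* ℂˣ)

private lemma ofAdd_mul_add (a b x : T) :
    Multiplicative.ofAdd ((a + b) * x)
      = Multiplicative.ofAdd (a * x) * Multiplicative.ofAdd (b * x) := by
  rw [← ofAdd_add, add_mul]

/-- Orthogonal complement of a set w.r.t. the pairing `(x, y) ↦ χ(x * y)`. -/
def perp (X : Set T) : AddSubgroup T where
  carrier := {y | ∀ x ∈ X, χ (Multiplicative.ofAdd (y * x)) = 1}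
  add_mem' {a b} ha hb := fun x hx => by
    rw [ofAdd_mul_add, map_mul, ha x hx, hb x hx, mul_one]
  zero_mem' := fun x hx => by simp
  neg_mem' {a} ha := fun x hx => by
    have : Multiplicative.ofAdd (-a * x) = (Multiplicative.ofAdd (a * x))⁻¹ := by
      rw [← ofAdd_neg, neg_mul]
    rw [this, map_inv, ha x hx, inv_one]

lemma mem_perp {X : Set T} {y : T} :
    y ∈ perp χ X ↔ ∀ x ∈ X, χ (Multiplicative.ofAdd (y * x)) = 1 := Iff.rfl

lemma perp_anti {X Y : Set T} (h : X ⊆ Y) : perp χ Y ≤ perp χ X :=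
  fun _ hy x hx => hy x (h hx)

lemma le_perp_perp (K : AddSubgroup T) :
    K ≤ perp χ ((perp χ (K : Set T) : AddSubgroup T) : Set T) := by
  intro k hk y hy
  rw [mul_comm]
  exact hy k hk

/-- difference trick : if `y - y'` is perp to `x` then the characters agree -/
private lemma char_eq_of_sub_mem {X : Set T} {y y' : T} (h : y - y' ∈ perp χ X)
    {x : T} (hx : x ∈ X) :
    χ (Multiplicative.ofAdd (y * x)) = χ (Multiplicative.ofAdd (y' * x)) := by
  have h1 := h x hx
  have : Multiplicative.ofAdd (y * x)
      = Multiplicative.ofAdd ((y - y') * x) * Multiplicative.ofAdd (y' * x) := by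
    rw [← ofAdd_add, ← add_mul, sub_add_cancel]
  rw [this, map_mul, h1, one_mul]

variable {χ}

lemma card_quot_perp_le (X : AddSubgroup T) :
    Nat.card (T ⧸ perp χ (X : Set T)) ≤ Nat.card X := by
  classical
  rw [← dual_card_eq (Q := X)]
  -- the embedding into the character group of X
  have key : ∀ y : T, ∃ f : Multiplicative ↥X →* ℂˣ,
      ∀ x : ↥X, f (Multiplicative.ofAdd x) = χ (Multiplicative.ofAdd (y * (x : T))) := by
    intro y
    refine ⟨AddMonoidHom.toMultiplicativeLeft
      { toFun := fun x : ↥X => Additive.ofMul (χ (Multiplicative.ofAdd (y * (x : T))))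
        map_zero' := by simp
        map_add' := by
          intro a b
          simp only [AddSubgroup.coe_add]
          rw [show y * ((a : T) + (b : T)) = y * a + y * b from mul_add _ _ _, ofAdd_add,
            map_mul, ofMul_mul] }, fun x => rfl⟩
  choose ψ hψ using key
  have hwd : ∀ y y' : T, (QuotientAddGroup.mk y : T ⧸ perp χ (X : Set T))
      = QuotientAddGroup.mk y' → ψ y = ψ y' := by
    intro y y' h
    have hmem : y - y' ∈ perp χ (X : Set T) := by
      have := QuotientAddGroup.eq.mp h
      have h2 : -(-y + y') ∈ perp χ (X : Set T) := (perp χ (X : Set T)).neg_mem this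
      simpa [neg_add_rev, sub_eq_add_neg, add_comm] using h2
    refine MonoidHom.ext fun x => Units.ext ?_
    obtain ⟨x, rfl⟩ := Multiplicative.ofAdd.surjective x
    rw [hψ, hψ]
    exact congrArg Units.val (char_eq_of_sub_mem χ hmem x.2)
  let F : T ⧸ perp χ (X : Set T) → (Multiplicative ↥X →* ℂˣ) :=
    fun q => Quotient.liftOn' q ψ (fun a b hab => hwd a b (Quotient.sound' hab))
  have hFmk : ∀ y : T, F (QuotientAddGroup.mk y) = ψ y := fun y => rfl
  haveI : Finite (Multiplicative ↥X →* ℂˣ) := dual_finite ↥X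
  refine Nat.card_le_card_of_injective F ?_
  intro q q' h
  obtain ⟨y, rfl⟩ := QuotientAddGroup.mk_surjective q
  obtain ⟨y', rfl⟩ := QuotientAddGroup.mk_surjective q'
  rw [hFmk, hFmk] at h
  refine (QuotientAddGroup.eq).mpr ?_
  intro x hx
  have := congrArg (fun f : Multiplicative ↥X →* ℂˣ =>
    f (Multiplicative.ofAdd (⟨x, hx⟩ : ↥X))) h
  simp only [hψ] at this
  have hsum : y' * x = (-y + y') * x + y * x := by ring
  have hsplit : Multiplicative.ofAdd (y' * x)
      = Multiplicative.ofAdd ((-y + y') * x) * Multiplicative.ofAdd (y * x) := by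
    rw [hsum, ofAdd_add]
  have h2 : χ (Multiplicative.ofAdd ((-y + y') * x)) * χ (Multiplicative.ofAdd (y * x))
      = 1 * χ (Multiplicative.ofAdd (y * x)) := by
    rw [one_mul, ← map_mul, ← hsplit]
    exact this.symm
  exact mul_right_cancel h2

end Perp

section Perp2

variable {T : Type*} [CommRing T] [Finite T] {χ : Multiplicative T →* ℂˣ}
variable (hnd : ∀ z : T, z ≠ 0 → ∃ y : T, χ (Multiplicative.ofAdd (y * z)) ≠ 1)

include hnd

lemma card_le_card_quot_perp (X : AddSubgroup T) :
    Nat.card X ≤ Nat.card (T ⧸ perp χ (X : Set T)) := by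
  classical
  rw [← dual_card_eq (Q := T ⧸ perp χ (X : Set T))]
  haveI : Finite (Multiplicative (T ⧸ perp χ (X : Set T)) →* ℂˣ) :=
    dual_finite (T ⧸ perp χ (X : Set T))
  -- for x ∈ X, the map y ↦ χ(y * x) descends to the quotient
  have key : ∀ x : ↥X, ∃ f : Multiplicative (T ⧸ perp χ (X : Set T)) →* ℂˣ,
      ∀ y : T, f (Multiplicative.ofAdd (QuotientAddGroup.mk y))
        = χ (Multiplicative.ofAdd (y * (x : T))) := by
    intro x
    have hcond : ∀ y ∈ perp χ (X : Set T),
        (fun y : T => Additive.ofMul (χ (Multiplicative.ofAdd (y * (x : T))))) y = 0 := by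
      intro y hy
      have := hy (x : T) x.2
      simpa using this
    refine ⟨AddMonoidHom.toMultiplicativeLeft
      (QuotientAddGroup.lift (perp χ (X : Set T))
        { toFun := fun y : T => Additive.ofMul (χ (Multiplicative.ofAdd (y * (x : T))))
          map_zero' := by simp
          map_add' := by
            intro a b
            rw [ofAdd_mul_add, map_mul, ofMul_mul] }
        hcond), fun y => rfl⟩
  choose Ψ hΨ using key
  refine Nat.card_le_card_of_injective Ψ ?_
  intro x x' h
  by_contra hne
  have hsub : ((x : T) - (x' : T)) ≠ 0 := by
    intro h0
    exact hne (Subtype.ext (by linear_combination (norm := abel) h0))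
  obtain ⟨y, hy⟩ := hnd _ hsub
  apply hy
  have h1 := congrArg (fun f : Multiplicative (T ⧸ perp χ (X : Set T)) →* ℂˣ =>
    f (Multiplicative.ofAdd (QuotientAddGroup.mk y))) h
  simp only [hΨ] at h1
  have hsum : y * ((x : T) - (x' : T)) = y * (x : T) - y * (x' : T) := by ring
  rw [hsum]
  have : Multiplicative.ofAdd (y * (x : T) - y * (x' : T))
      = Multiplicative.ofAdd (y * (x : T)) * (Multiplicative.ofAdd (y * (x' : T)))⁻¹ := by
    rw [← ofAdd_neg, ← ofAdd_add, sub_eq_add_neg]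
  rw [this, map_mul, map_inv, h1, mul_inv_cancel]

lemma card_mul_card_perp_le (X : AddSubgroup T) :
    Nat.card X * Nat.card (perp χ (X : Set T)) ≤ Nat.card T := by
  have h1 := card_le_card_quot_perp hnd X
  have h2 := AddSubgroup.card_eq_card_quotient_mul_card_addSubgroup (perp χ (X : Set T))
  rw [h2]
  exact Nat.mul_le_mul_right _ h1

lemma card_le_card_mul_card_perp (X : AddSubgroup T) :
    Nat.card T ≤ Nat.card X * Nat.card (perp χ (X : Set T)) := by
  have h1 := card_quot_perp_le (χ := χ) X
  have h2 := AddSubgroup.card_eq_card_quotient_mul_card_addSubgroup (perp χ (X : Set T))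
  rw [h2]
  exact Nat.mul_le_mul_right _ h1

lemma perp_perp_eq (K : AddSubgroup T) :
    perp χ ((perp χ (K : Set T) : AddSubgroup T) : Set T) = K := by
  have hle := le_perp_perp χ K
  have h1 := card_mul_card_perp_le hnd (perp χ (K : Set T))
  have h2 := card_le_card_mul_card_perp (hnd := hnd) K
  have hpos : 0 < Nat.card (perp χ (K : Set T)) := Nat.card_pos
  have hcard : Nat.card (perp χ ((perp χ (K : Set T) : AddSubgroup T) : Set T))
      ≤ Nat.card K := by
    have := le_trans h1 h2
    rw [mul_comm (Nat.card K)] at this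
    exact Nat.le_of_mul_le_mul_left this hpos
  -- subgroup equality from inclusion + card
  symm
  apply SetLike.coe_injective
  apply Set.eq_of_subset_of_ncard_le
  · exact hle
  · rw [← Nat.card_coe_set_eq, ← Nat.card_coe_set_eq]
    exact hcard
  · exact Set.toFinite _

end Perp2

section ChainLemma

variable {T : Type*} [CommRing T] [Finite T]

/-- The key local inequality, for "chain-like" finite commutative rings. -/
lemma chain_pair_card (σ : T) (hσ : σ ≠ 0) (m : Ideal T)
    (hu : ∀ x : T, x ∉ m → IsUnit x) (hσm : ∀ x ∈ m, σ * x = 0)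
    (hgen : ∀ y : T, y ≠ 0 → ∃ t, y * t = σ)
    (L L' K : AddSubgroup T) (hmul : ∀ l ∈ L, ∀ l' ∈ L', l * l' ∈ K)
    (hK : ∀ I : Ideal T, (I : Set T) ⊆ (K : Set T) → I = ⊥) :
    Nat.card L * Nat.card L' ≤ Nat.card T := by
  obtain ⟨χ, hχ⟩ := exists_char_ne_one hσ
  have hnd : ∀ z : T, z ≠ 0 → ∃ y : T, χ (Multiplicative.ofAdd (y * z)) ≠ 1 := by
    intro z hz
    obtain ⟨t, ht⟩ := hgen z hz
    refine ⟨t, ?_⟩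
    rw [mul_comm z t] at ht
    rw [ht]
    exact hχ
  -- there is a unit in `perp K`
  have hunit : ∃ u ∈ perp χ (K : Set T), IsUnit u := by
    by_contra hcon
    push_neg at hcon
    have hm : ∀ u ∈ perp χ (K : Set T), u ∈ m := by
      intro u hu'
      by_contra hum
      exact (hcon u hu') (hu u hum)
    have hσT : ∀ t : T, σ * t ∈ K := by
      intro t
      rw [← perp_perp_eq hnd K]
      intro y hy
      have hym : y ∈ m := hm y hy
      have hrw : (σ * t) * y = σ * (t * y) := by ring
      rw [hrw, hσm _ (m.mul_mem_left t hym)]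
      simp
    have hspan : Ideal.span {σ} = ⊥ := by
      apply hK
      intro z hz
      rw [SetLike.mem_coe, Ideal.mem_span_singleton'] at hz
      obtain ⟨a, rfl⟩ := hz
      have := hσT a
      rwa [mul_comm σ a] at this
    exact hσ (Ideal.span_singleton_eq_bot.mp hspan)
  obtain ⟨u, hup, huu⟩ := hunit
  let f : T →+ T := AddMonoidHom.mulLeft u
  have hfinj : Function.Injective f := by
    intro a b hab
    have := congrArg (fun t => ((huu.unit⁻¹ : Tˣ) : T) * t) hab
    simpa [f, ← mul_assoc, IsUnit.unit_spec] using this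
  let uL' : AddSubgroup T := L'.map f
  have hcard : Nat.card uL' = Nat.card L' :=
    (Nat.card_congr (AddSubgroup.equivMapOfInjective L' f hfinj).toEquiv).symm
  have hLsub : L ≤ perp χ (uL' : Set T) := by
    intro l hl z hz
    obtain ⟨l', hl', rfl⟩ := hz
    have hrw : l * (f l') = u * (l * l') := by
      show l * (u * l') = u * (l * l')
      ring
    rw [hrw]
    exact hup (l * l') (hmul l hl l' hl')
  have h1 : Nat.card L ≤ Nat.card (perp χ (uL' : Set T)) :=
    AddSubgroup.card_le_of_le hLsub
  have h2 := card_mul_card_perp_le hnd uL'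
  calc Nat.card L * Nat.card L' = Nat.card L * Nat.card uL' := by rw [hcard]
    _ ≤ Nat.card (perp χ (uL' : Set T)) * Nat.card uL' := Nat.mul_le_mul_right _ h1
    _ = Nat.card uL' * Nat.card (perp χ (uL' : Set T)) := mul_comm _ _
    _ ≤ Nat.card T := h2

end ChainLemma

section Good

/-- The key property of a finite commutative ring: any pair of additive subgroups
`L, L'` whose products land in a subgroup `K` containing no nonzero ideal satisfies
`|L| * |L'| ≤ |T|`. -/
def Good (R : Type*) [CommRing R] : Prop :=
  ∀ L L' K : AddSubgroup R, (∀ l ∈ L, ∀ l' ∈ L', l * l' ∈ K) →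
    (∀ I : Ideal R, (I : Set R) ⊆ (K : Set R) → I = ⊥) →
    Nat.card L * Nat.card L' ≤ Nat.card R

lemma good_of_subsingleton {R : Type*} [CommRing R] [Subsingleton R] : Good R := by
  intro L L' K _ _
  haveI : Unique R := ⟨⟨0⟩, fun a => Subsingleton.elim a 0⟩
  haveI : ∀ X : AddSubgroup R, Unique ↥X :=
    fun X => ⟨⟨⟨0, X.zero_mem⟩⟩, fun a => Subtype.ext (Subsingleton.elim _ _)⟩
  rw [Nat.card_unique, Nat.card_unique, Nat.card_unique]

lemma card_map_eq_of_injOn {G H : Type*} [AddCommGroup G] [AddCommGroup H]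
    (f : G →+ H) (S : AddSubgroup G) (hinj : ∀ s ∈ S, f s = 0 → s = 0) :
    Nat.card (S.map f) = Nat.card S := by
  symm
  apply Nat.card_congr
  refine Equiv.ofBijective (fun s => ⟨f s, ⟨(s : G), s.2, rfl⟩⟩) ⟨?_, ?_⟩
  · intro s s' h
    have h1 : f ((s : G) - (s' : G)) = 0 := by
      rw [map_sub, sub_eq_zero]
      exact congrArg Subtype.val h
    have := hinj _ (S.sub_mem s.2 s'.2) h1
    exact Subtype.ext (by linear_combination (norm := abel) this)
  · rintro ⟨z, x, hx, rfl⟩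
    exact ⟨⟨x, hx⟩, rfl⟩

lemma card_decomp {G H : Type*} [AddCommGroup G] [AddCommGroup H] [Finite G]
    (f : G →+ H) (X : AddSubgroup G) :
    Nat.card X = Nat.card (X.map f) * Nat.card (X ⊓ f.ker : AddSubgroup G) := by
  classical
  let g : ↥X →+ H := f.comp X.subtype
  have h1 : Nat.card ↥X = Nat.card (↥X ⧸ g.ker) * Nat.card g.ker :=
    AddSubgroup.card_eq_card_quotient_mul_card_addSubgroup g.ker
  have h2 : Nat.card (↥X ⧸ g.ker) = Nat.card g.range :=
    Nat.card_congr (QuotientAddGroup.quotientKerEquivRange g).toEquiv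
  have h3 : Nat.card g.range = Nat.card (X.map f) := by
    apply Nat.card_congr
    refine Equiv.ofBijective (fun z => ⟨(z : H), ?_⟩) ⟨?_, ?_⟩
    · obtain ⟨x, hx⟩ := z.2
      exact ⟨x, x.2, hx⟩
    · intro a b h
      have h2 := congrArg (Subtype.val) h
      exact Subtype.ext h2
    · rintro ⟨z, x, hx, rfl⟩
      exact ⟨⟨f x, ⟨⟨x, hx⟩, rfl⟩⟩, rfl⟩
  have h4 : Nat.card g.ker = Nat.card (X ⊓ f.ker : AddSubgroup G) := by
    apply Nat.card_congr
    refine Equiv.ofBijective (fun z => ⟨((z : ↥X) : G), ⟨(z : ↥X).2, z.2⟩⟩) ⟨?_, ?_⟩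
    · intro a b h
      have h2 := congrArg (Subtype.val) h
      exact Subtype.ext (Subtype.ext h2)
    · rintro ⟨x, hX, hker⟩
      exact ⟨⟨⟨x, hX⟩, hker⟩, rfl⟩
  rw [h1, h2, h3, h4]

end Good

section Split

variable {R : Type*} [CommRing R]

lemma factor_surjective (I J : Ideal R) (h : I ≤ J) :
    Function.Surjective (Ideal.Quotient.factor h) := by
  intro q
  obtain ⟨x, rfl⟩ := Ideal.Quotient.mk_surjective q
  exact ⟨Ideal.Quotient.mk I x, Ideal.Quotient.factor_mk h x⟩

lemma good_split (I J : Ideal R) (hco : IsCoprime I J)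
    [Finite (R ⧸ I * J)] (hgI : Good (R ⧸ I)) (hgJ : Good (R ⧸ J)) :
    Good (R ⧸ I * J) := by
  intro L L' K hmul hK
  let πI : (R ⧸ I * J) →+* R ⧸ I := Ideal.Quotient.factor Ideal.mul_le_left
  let πJ : (R ⧸ I * J) →+* R ⧸ J := Ideal.Quotient.factor Ideal.mul_le_right
  have hπI : Function.Surjective πI := factor_surjective _ _ _
  have hπJ : Function.Surjective πJ := factor_surjective _ _ _
  haveI : Finite (R ⧸ I) := Finite.of_surjective πI hπI
  haveI : Finite (R ⧸ J) := Finite.of_surjective πJ hπJ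
  -- joint injectivity
  have hinj : ∀ t : R ⧸ I * J, πI t = 0 → πJ t = 0 → t = 0 := by
    intro t h1 h2
    obtain ⟨x, rfl⟩ := Ideal.Quotient.mk_surjective t
    rw [show πI (Ideal.Quotient.mk (I * J) x) = Ideal.Quotient.mk I x from
      Ideal.Quotient.factor_mk _ x, Ideal.Quotient.eq_zero_iff_mem] at h1
    rw [show πJ (Ideal.Quotient.mk (I * J) x) = Ideal.Quotient.mk J x from
      Ideal.Quotient.factor_mk _ x, Ideal.Quotient.eq_zero_iff_mem] at h2
    rw [Ideal.Quotient.eq_zero_iff_mem]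
    rw [← Ideal.inf_eq_mul_of_isCoprime hco]
    exact ⟨h1, h2⟩
  have hcardT : Nat.card (R ⧸ I * J) = Nat.card (R ⧸ I) * Nat.card (R ⧸ J) := by
    rw [Nat.card_congr (Ideal.quotientMulEquivQuotientProd I J hco).toEquiv, Nat.card_prod]
  let πIa : (R ⧸ I * J) →+ R ⧸ I := πI.toAddMonoidHom
  let πJa : (R ⧸ I * J) →+ R ⧸ J := πJ.toAddMonoidHom
  -- the two pairs
  let X₁ := L.map πIa
  let Y₁ := (L' ⊓ πJa.ker).map πIa
  let K₁ := (K ⊓ πJa.ker).map πIa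
  let X₂ := L'.map πJa
  let Y₂ := (L ⊓ πIa.ker).map πJa
  let K₂ := (K ⊓ πIa.ker).map πJa
  have hmul₁ : ∀ x ∈ X₁, ∀ y ∈ Y₁, x * y ∈ K₁ := by
    rintro x ⟨l, hl, rfl⟩ y ⟨w, ⟨hw1, hw2⟩, rfl⟩
    refine ⟨l * w, ⟨hmul l hl w hw1, ?_⟩, map_mul πI l w ▸ rfl⟩
    · show πJ (l * w) = 0
      rw [map_mul]
      have : πJa w = 0 := hw2
      rw [show πJ w = 0 from this, mul_zero]
  have hmul₂ : ∀ x ∈ X₂, ∀ y ∈ Y₂, x * y ∈ K₂ := by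
    rintro x ⟨l', hl', rfl⟩ y ⟨w, ⟨hw1, hw2⟩, rfl⟩
    refine ⟨w * l', ⟨hmul w hw1 l' hl', ?_⟩, ?_⟩
    · show πI (w * l') = 0
      rw [map_mul]
      have : πIa w = 0 := hw2
      rw [show πI w = 0 from this, zero_mul]
    · show πJ (w * l') = πJ l' * πJ w
      rw [map_mul, mul_comm]
  have hKside : ∀ (f : (R ⧸ I * J) →+* R ⧸ I) (g : (R ⧸ I * J) →+* R ⧸ J), True := fun _ _ => trivial
  -- ideal condition on K₁
  have hK₁ : ∀ Q : Ideal (R ⧸ I), (Q : Set (R ⧸ I)) ⊆ (K₁ : Set (R ⧸ I)) → Q = ⊥ := by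
    intro Q hQ
    have hW : (Q.comap πI ⊓ RingHom.ker πJ : Ideal (R ⧸ I * J)) = ⊥ := by
      apply hK
      rintro t ⟨ht1, ht2⟩
      have : πI t ∈ (K₁ : Set (R ⧸ I)) := hQ ht1
      obtain ⟨k, ⟨hk1, hk2⟩, hk3⟩ := this
      have hk2' : πJ k = 0 := hk2
      have hk3' : πI k = πI t := hk3
      have hdiff : t - k = 0 := by
        apply hinj
        · rw [map_sub, sub_eq_zero]
          exact hk3'.symm
        · rw [map_sub, hk2', show πJ t = 0 from ht2, sub_self]
      have : t = k := by linear_combination (norm := ring) hdiff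
      rw [this]
      exact hk1
    apply (Submodule.eq_bot_iff Q).mpr
    intro z hz
    obtain ⟨k, ⟨hk1, hk2⟩, hk3⟩ := hQ hz
    have hkW : k ∈ (Q.comap πI ⊓ RingHom.ker πJ : Ideal (R ⧸ I * J)) := by
      constructor
      · show πI k ∈ Q
        rw [show πIa k = πI k from rfl] at hk3
        rw [hk3]
        exact hz
      · exact hk2
    rw [hW] at hkW
    rw [← hk3, show k = 0 from hkW]
    exact map_zero πIa
  have hK₂ : ∀ Q : Ideal (R ⧸ J), (Q : Set (R ⧸ J)) ⊆ (K₂ : Set (R ⧸ J)) → Q = ⊥ := by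
    intro Q hQ
    have hW : (Q.comap πJ ⊓ RingHom.ker πI : Ideal (R ⧸ I * J)) = ⊥ := by
      apply hK
      rintro t ⟨ht1, ht2⟩
      have : πJ t ∈ (K₂ : Set (R ⧸ J)) := hQ ht1
      obtain ⟨k, ⟨hk1, hk2⟩, hk3⟩ := this
      have hk2' : πI k = 0 := hk2
      have hk3' : πJ k = πJ t := hk3
      have hdiff : t - k = 0 := by
        apply hinj
        · rw [map_sub, hk2', show πI t = 0 from ht2, sub_self]
        · rw [map_sub, sub_eq_zero]
          exact hk3'.symm
      have : t = k := by linear_combination (norm := ring) hdiff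
      rw [this]
      exact hk1
    apply (Submodule.eq_bot_iff Q).mpr
    intro z hz
    obtain ⟨k, ⟨hk1, hk2⟩, hk3⟩ := hQ hz
    have hkW : k ∈ (Q.comap πJ ⊓ RingHom.ker πI : Ideal (R ⧸ I * J)) := by
      constructor
      · show πJ k ∈ Q
        rw [show πJa k = πJ k from rfl] at hk3
        rw [hk3]
        exact hz
      · exact hk2
    rw [hW] at hkW
    rw [← hk3, show k = 0 from hkW]
    exact map_zero πJa
  have b1 : Nat.card X₁ * Nat.card Y₁ ≤ Nat.card (R ⧸ I) := hgI X₁ Y₁ K₁ hmul₁ hK₁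
  have b2 : Nat.card X₂ * Nat.card Y₂ ≤ Nat.card (R ⧸ J) := hgJ X₂ Y₂ K₂ hmul₂ hK₂
  -- identifications of cardinalities
  have e1 : Nat.card Y₁ = Nat.card (L' ⊓ πJa.ker : AddSubgroup (R ⧸ I * J)) := by
    apply card_map_eq_of_injOn
    rintro s ⟨_, hs2⟩ h0
    exact hinj s h0 hs2
  have e2 : Nat.card Y₂ = Nat.card (L ⊓ πIa.ker : AddSubgroup (R ⧸ I * J)) := by
    apply card_map_eq_of_injOn
    rintro s ⟨_, hs2⟩ h0
    exact hinj s hs2 h0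
  have d1 : Nat.card L = Nat.card X₁ * Nat.card (L ⊓ πIa.ker : AddSubgroup (R ⧸ I * J)) :=
    card_decomp πIa L
  have d2 : Nat.card L' = Nat.card X₂ * Nat.card (L' ⊓ πJa.ker : AddSubgroup (R ⧸ I * J)) :=
    card_decomp πJa L'
  calc Nat.card L * Nat.card L'
      = (Nat.card X₁ * Nat.card Y₁) * (Nat.card X₂ * Nat.card Y₂) := by
        rw [d1, d2, e1, e2]; ring
    _ ≤ Nat.card (R ⧸ I) * Nat.card (R ⧸ J) := Nat.mul_le_mul b1 b2
    _ = Nat.card (R ⧸ I * J) := hcardT.symm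

end Split

section NumberFieldPart

set_option synthInstance.maxHeartbeats 1000000
set_option maxHeartbeats 1000000

variable {F₀ : Type*} [Field F₀] [NumberField F₀]

lemma good_primePow (P : Ideal (𝓞 F₀)) (hP : P.IsPrime) (hPbot : P ≠ ⊥)
    (n : ℕ) (hn : n ≠ 0) : Good ((𝓞 F₀) ⧸ P ^ n) := by
  have hPtop : P ≠ ⊤ := hP.ne_top
  have hPn_bot : P ^ n ≠ ⊥ := by
    rw [← Ideal.zero_eq_bot] at hPbot ⊢
    exact pow_ne_zero n hPbot
  haveI : Fintype ((𝓞 F₀) ⧸ P ^ n) := @Fintype.ofFinite _ (Ideal.finiteQuotientOfFreeOfNeBot _ hPn_bot)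
  -- a socle generator
  obtain ⟨σ', hσ'mem, hσ'not⟩ := Ideal.exists_mem_pow_notMem_pow_succ P hPbot hPtop (n - 1)
  rw [Nat.sub_add_cancel (Nat.one_le_iff_ne_zero.mpr hn)] at hσ'not
  set mk := Ideal.Quotient.mk (P ^ n) with hmk
  have hmksurj : Function.Surjective mk := Ideal.Quotient.mk_surjective
  set σ : (𝓞 F₀) ⧸ P ^ n := mk σ' with hσdef
  have hσ : σ ≠ 0 := by
    rw [hσdef, Ne, Ideal.Quotient.eq_zero_iff_mem]
    exact hσ'not
  set m : Ideal ((𝓞 F₀) ⧸ P ^ n) := P.map mk with hmdef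
  have hmem_m : ∀ x : 𝓞 F₀, mk x ∈ m ↔ x ∈ P := by
    intro x
    constructor
    · intro hx
      rw [hmdef] at hx
      obtain ⟨p, hp, hpx⟩ := (Ideal.mem_map_iff_of_surjective mk hmksurj).mp hx
      have : p - x ∈ P ^ n := by
        rw [← Ideal.Quotient.eq_zero_iff_mem, map_sub, hpx, sub_self]
      have hPn_le : P ^ n ≤ P := Ideal.pow_le_self hn
      have : p - x ∈ P := hPn_le this
      have := P.sub_mem hp this
      simpa using this
    · intro hx
      exact Ideal.mem_map_of_mem mk hx
  have hu : ∀ x : (𝓞 F₀) ⧸ P ^ n, x ∉ m → IsUnit x := by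
    intro x hx
    obtain ⟨x, rfl⟩ := hmksurj x
    have hxP : x ∉ P := fun h => hx ((hmem_m x).mpr h)
    obtain ⟨y, i, hi, hyx⟩ := (hP.isMaximal hPbot).exists_inv hxP
    have hnil : IsNilpotent (mk i) := by
      refine ⟨n, ?_⟩
      rw [← map_pow, Ideal.Quotient.eq_zero_iff_mem]
      exact Ideal.pow_mem_pow hi n
    have hunit : IsUnit (1 - mk i) := hnil.isUnit_one_sub
    have heq : mk y * mk x = 1 - mk i := by
      rw [← map_mul, ← map_one mk, ← map_sub]
      congr 1
      linear_combination hyx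
    rw [← heq] at hunit
    exact isUnit_of_mul_isUnit_right hunit
  have hσm : ∀ x ∈ m, σ * x = 0 := by
    intro x hx
    rw [hmdef] at hx
    obtain ⟨p, hp, rfl⟩ := (Ideal.mem_map_iff_of_surjective mk hmksurj).mp hx
    rw [hσdef, ← map_mul, Ideal.Quotient.eq_zero_iff_mem]
    have h1 : σ' * p ∈ P ^ (n - 1) * P := Ideal.mul_mem_mul hσ'mem hp
    have h2 : P ^ (n - 1) * P = P ^ n := by
      rw [← pow_succ, Nat.sub_add_cancel (Nat.one_le_iff_ne_zero.mpr hn)]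
    rwa [h2] at h1
  have hgen : ∀ y : (𝓞 F₀) ⧸ P ^ n, y ≠ 0 → ∃ t, y * t = σ := by
    intro y hy
    obtain ⟨y, rfl⟩ := hmksurj y
    have hyP : y ∉ P ^ n := fun h => hy (Ideal.Quotient.eq_zero_iff_mem.mpr h)
    set D : Ideal (𝓞 F₀) := Ideal.span {y} ⊔ P ^ n with hDdef
    have hD_dvd : D ∣ P ^ n := Ideal.dvd_iff_le.mpr le_sup_right
    have hPprime : Prime P := Ideal.prime_of_isPrime hPbot hP
    obtain ⟨i, hi_le, hDi⟩ := (dvd_prime_pow hPprime n).mp hD_dvd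
    rw [associated_iff_eq] at hDi
    have hi_lt : i ≤ n - 1 := by
      rcases Nat.lt_or_ge i n with h | h
      · omega
      · exfalso
        have : i = n := le_antisymm hi_le h
        rw [this] at hDi
        exact hyP (hDi ▸ (le_sup_left : Ideal.span {y} ≤ D) (Ideal.mem_span_singleton_self y))
    have hσ'D : σ' ∈ D := by
      rw [hDi]
      exact Ideal.pow_le_pow_right hi_lt hσ'mem
    rw [hDdef] at hσ'D
    obtain ⟨a, ha, b, hb, hab⟩ := Submodule.mem_sup.mp hσ'D
    obtain ⟨t, ht⟩ := Ideal.mem_span_singleton'.mp ha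
    refine ⟨mk t, ?_⟩
    have hyt : y * t = σ' - b := by linear_combination ht + hab
    calc mk y * mk t = mk (y * t) := (map_mul mk y t).symm
      _ = mk σ' - mk b := by rw [hyt, map_sub]
      _ = σ := by rw [Ideal.Quotient.eq_zero_iff_mem.mpr hb, sub_zero, hσdef]
  exact chain_pair_card σ hσ m hu hσm hgen

end NumberFieldPart

section Recursion

set_option synthInstance.maxHeartbeats 1000000
set_option maxHeartbeats 1000000

variable {F₀ : Type*} [Field F₀] [NumberField F₀]

lemma good_quot_aux : ∀ (N : ℕ) (c : Ideal (𝓞 F₀)), c ≠ ⊥ →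
    Nat.card ((𝓞 F₀) ⧸ c) = N → Good ((𝓞 F₀) ⧸ c) := by
  intro N
  induction N using Nat.strong_induction_on with
  | _ N ih =>
    intro c hcbot hcN
    by_cases hctop : c = ⊤
    · haveI : Subsingleton ((𝓞 F₀) ⧸ c) := Ideal.Quotient.subsingleton_iff.mpr hctop
      exact good_of_subsingleton
    · have hc0 : c ≠ 0 := by rwa [Ideal.zero_eq_bot]
      have hcu : ¬IsUnit c := fun h => hctop (Ideal.isUnit_iff.mp h)
      obtain ⟨P, hPirr, hPdvd⟩ := WfDvdMonoid.exists_irreducible_factor hcu hc0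
      obtain ⟨n, b, hbnd, hcnb⟩ := WfDvdMonoid.max_power_factor hc0 hPirr
      have hPprime : Prime P := hPirr.prime
      have hPbot : P ≠ ⊥ := by rw [← Ideal.zero_eq_bot]; exact hPprime.ne_zero
      have hPisPrime : P.IsPrime := Ideal.isPrime_of_prime hPprime
      have hn : n ≠ 0 := by
        rintro rfl
        rw [pow_zero, one_mul] at hcnb
        exact hbnd (hcnb ▸ hPdvd)
      have hbbot : b ≠ ⊥ := by
        rintro rfl
        rw [← Ideal.zero_eq_bot, mul_zero] at hcnb
        exact hc0 hcnb
      have hPn_bot : P ^ n ≠ ⊥ := by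
        rw [← Ideal.zero_eq_bot]
        exact pow_ne_zero n hPprime.ne_zero
      haveI : Fintype ((𝓞 F₀) ⧸ c) := @Fintype.ofFinite _ (Ideal.finiteQuotientOfFreeOfNeBot _ hcbot)
      haveI : Fintype ((𝓞 F₀) ⧸ P ^ n) := @Fintype.ofFinite _ (Ideal.finiteQuotientOfFreeOfNeBot _ hPn_bot)
      haveI : Fintype ((𝓞 F₀) ⧸ b) := @Fintype.ofFinite _ (Ideal.finiteQuotientOfFreeOfNeBot _ (by
        rwa [← Ideal.zero_eq_bot] at hbbot ⊢))
      have hgoodPn : Good ((𝓞 F₀) ⧸ P ^ n) := good_primePow P hPisPrime hPbot n hn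
      by_cases hbtop : b = ⊤
      · rw [hcnb, hbtop, Ideal.mul_top]
        exact hgoodPn
      · -- coprimality of P^n and b
        have hco : IsCoprime (P ^ n) b := by
          rw [Ideal.isCoprime_iff_sup_eq]
          by_contra hsup
          obtain ⟨M, hM, hMle⟩ := Ideal.exists_le_maximal _ hsup
          have hMbot : M ≠ ⊥ := by
            rintro rfl
            have : P ^ n ≤ ⊥ := le_trans le_sup_left hMle
            exact hPn_bot (le_bot_iff.mp this)
          have hMprime : Prime M := Ideal.prime_of_isPrime hMbot hM.isPrime
          have hMP : M ∣ P ^ n := Ideal.dvd_iff_le.mpr (le_trans le_sup_left hMle)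
          have hMb : M ∣ b := Ideal.dvd_iff_le.mpr (le_trans le_sup_right hMle)
          have : M ∣ P := hMprime.dvd_of_dvd_pow hMP
          have hMeqP : M = P := by
            rw [← associated_iff_eq]
            exact hMprime.irreducible.associated_of_dvd hPirr this
          exact hbnd (hMeqP ▸ hMb)
        -- cardinalities
        have hcardc : Nat.card ((𝓞 F₀) ⧸ c)
            = Nat.card ((𝓞 F₀) ⧸ P ^ n) * Nat.card ((𝓞 F₀) ⧸ b) := by
          rw [hcnb, Nat.card_congr (Ideal.quotientMulEquivQuotientProd _ _ hco).toEquiv,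
            Nat.card_prod]
        have hPn_netop : P ^ n ≠ ⊤ := by
          intro h
          have : (⊤ : Ideal (𝓞 F₀)) ≤ P := h ▸ Ideal.pow_le_self hn
          exact hPisPrime.ne_top (top_le_iff.mp this)
        haveI : Nontrivial ((𝓞 F₀) ⧸ P ^ n) := Ideal.Quotient.nontrivial_iff.mpr hPn_netop
        have h2le : 2 ≤ Nat.card ((𝓞 F₀) ⧸ P ^ n) := Finite.one_lt_card
        have hbpos : 0 < Nat.card ((𝓞 F₀) ⧸ b) := Nat.card_pos
        have hlt : Nat.card ((𝓞 F₀) ⧸ b) < N := by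
          rw [← hcN, hcardc]
          calc Nat.card ((𝓞 F₀) ⧸ b) = 1 * Nat.card ((𝓞 F₀) ⧸ b) := (one_mul _).symm
            _ < Nat.card ((𝓞 F₀) ⧸ P ^ n) * Nat.card ((𝓞 F₀) ⧸ b) :=
              (Nat.mul_lt_mul_right hbpos).mpr (by omega)
        have hgoodb : Good ((𝓞 F₀) ⧸ b) := ih _ hlt b (by
          rwa [← Ideal.zero_eq_bot] at hbbot ⊢) rfl
        rw [hcnb]
        haveI : Finite ((𝓞 F₀) ⧸ P ^ n * b) := by
          rw [← hcnb]
          infer_instance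
        exact good_split (P ^ n) b hco hgoodPn hgoodb

end Recursion

set_option synthInstance.maxHeartbeats 1000000 in
set_option maxHeartbeats 1000000 in
/-- Let `F₀` be a number field with maximal order `O_{F₀}`, `O` an order (a finite
index subring) of `O_{F₀}`, and `𝔠 = {α ∈ O_{F₀} : α O_{F₀} ⊆ O}` its conductor.
Then `Nm(𝔠) ≤ [O_{F₀} : O]²`. -/
theorem stmt16 (F₀ : Type*) [Field F₀] [NumberField F₀]
    (O : Subring (𝓞 F₀)) (hO : O.toAddSubgroup.index ≠ 0)
    (c : Ideal (𝓞 F₀))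
    (hc : (c : Set (𝓞 F₀)) = {x : 𝓞 F₀ | ∀ y : 𝓞 F₀, x * y ∈ O}) :
    Ideal.absNorm c ≤ O.toAddSubgroup.index ^ 2 := by
  classical
  set n := O.toAddSubgroup.index with hn
  have hmemc : ∀ x : 𝓞 F₀, x ∈ c ↔ ∀ y : 𝓞 F₀, x * y ∈ O := by
    intro x
    constructor
    · intro hx
      have : x ∈ (c : Set (𝓞 F₀)) := hx
      rw [hc] at this
      exact this
    · intro hx
      have : x ∈ (c : Set (𝓞 F₀)) := by rw [hc]; exact hx
      exact this
  have hcO : ∀ x ∈ c, x ∈ O := by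
    intro x hx
    have := (hmemc x).mp hx 1
    rwa [mul_one] at this
  -- n • y ∈ O for all y
  have hnsmul : ∀ y : 𝓞 F₀, (n : 𝓞 F₀) * y ∈ O := by
    intro y
    have h1 : n • y ∈ O.toAddSubgroup := O.toAddSubgroup.nsmul_index_mem y
    rwa [nsmul_eq_mul] at h1
  have hnc : (n : 𝓞 F₀) ∈ c := (hmemc _).mpr (fun y => hnsmul y)
  have hcbot : c ≠ ⊥ := by
    intro h
    rw [h] at hnc
    have : (n : 𝓞 F₀) = 0 := hnc
    exact hO (Nat.cast_eq_zero.mp this)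
  haveI : Fintype ((𝓞 F₀) ⧸ c) := @Fintype.ofFinite _ (Ideal.finiteQuotientOfFreeOfNeBot _ hcbot)
  set mk := Ideal.Quotient.mk c with hmkdef
  have hmksurj : Function.Surjective mk := Ideal.Quotient.mk_surjective
  set mka : 𝓞 F₀ →+ (𝓞 F₀) ⧸ c := mk.toAddMonoidHom with hmka
  set S : AddSubgroup ((𝓞 F₀) ⧸ c) := O.toAddSubgroup.map mka with hS
  have hgood : Good ((𝓞 F₀) ⧸ c) := good_quot_aux _ c hcbot rfl
  have hmul : ∀ l ∈ S, ∀ l' ∈ S, l * l' ∈ S := by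
    rintro l ⟨o, ho, rfl⟩ l' ⟨o', ho', rfl⟩
    refine ⟨o * o', O.mul_mem ho ho', ?_⟩
    show mk (o * o') = mka o * mka o'
    exact map_mul mk o o'
  have hK : ∀ Q : Ideal ((𝓞 F₀) ⧸ c), (Q : Set ((𝓞 F₀) ⧸ c)) ⊆ (S : Set ((𝓞 F₀) ⧸ c)) →
      Q = ⊥ := by
    intro Q hQ
    apply (Submodule.eq_bot_iff Q).mpr
    intro z hz
    obtain ⟨x, rfl⟩ := hmksurj z
    rw [Ideal.Quotient.eq_zero_iff_mem]
    refine (hmemc x).mpr ?_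
    intro y
    have hzy : mk x * mk y ∈ Q := Ideal.mul_mem_right (mk y) Q hz
    have : mk x * mk y ∈ (S : Set ((𝓞 F₀) ⧸ c)) := hQ hzy
    obtain ⟨o, ho, hoe⟩ := this
    have hsub : x * y - o ∈ c := by
      rw [← Ideal.Quotient.mk_eq_mk_iff_sub_mem, map_mul]
      exact hoe.symm
    have : x * y - o ∈ O := hcO _ hsub
    have := O.add_mem this ho
    rwa [sub_add_cancel] at this
  have hb := hgood S S S hmul hK
  -- index bookkeeping
  have hcomap : S.comap mka = O.toAddSubgroup := by
    ext x
    constructor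
    · rintro ⟨o, ho, hoe⟩
      have hsub : o - x ∈ c := by
        rw [← Ideal.Quotient.mk_eq_mk_iff_sub_mem]
        exact hoe
      have : o - x ∈ O := hcO _ hsub
      have := O.sub_mem ho this
      rwa [sub_sub_cancel] at this
    · intro hx
      exact ⟨x, hx, rfl⟩
  have hmkasurj : Function.Surjective mka := hmksurj
  have hidx : S.index = n := by
    rw [hn, ← hcomap]
    exact (AddSubgroup.index_comap_of_surjective S hmkasurj).symm
  have hcardT : Nat.card S * n = Nat.card ((𝓞 F₀) ⧸ c) := by
    rw [← hidx]
    exact AddSubgroup.card_mul_index S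
  have habs : Ideal.absNorm c = Nat.card ((𝓞 F₀) ⧸ c) := by
    rw [Ideal.absNorm_apply, Submodule.cardQuot_apply]
  have hspos : 0 < Nat.card S := Nat.card_pos
  have hsn : Nat.card S ≤ n := by
    have h1 : Nat.card S * Nat.card S ≤ Nat.card S * n := by
      rw [hcardT]
      exact hb
    exact Nat.le_of_mul_le_mul_left h1 hspos
  rw [habs, ← hcardT, pow_two]
  exact Nat.mul_le_mul hsn (le_refl n)
end

section
/- Let (D, †) be a simple ℚ-algebra with positive involution, with dim_F D = d² over its centre F and with [F:ℚ] = 2e (type IV). For any order R in D, |disc(R)| = d^{2d²e} · covol(R)², where covol(R) is measured with respect to the inner product (a,b) ↦ Trd_{D_ℝ/ℝ}(a b†) on D_ℝ. In particular, since reduced traces of elements of R are integers, |disc(R)| ≥ d^{2d²e}. -/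
open scoped MatrixOrder in
open Matrix in
/-- A rational square matrix whose quadratic form is positive on nonzero rational
vectors has positive determinant. -/
lemma det_pos_of_quadform_pos {n : ℕ} (G : Matrix (Fin n) (Fin n) ℚ)
    (h : ∀ x : Fin n → ℚ, x ≠ 0 → 0 < x ⬝ᵥ G.mulVec x) : 0 < G.det := by
  classical
  set S : Matrix (Fin n) (Fin n) ℚ := (1/2 : ℚ) • (G + Gᵀ) with hSdef
  set A : Matrix (Fin n) (Fin n) ℚ := (1/2 : ℚ) • (G - Gᵀ) with hAdef
  have hGSA : G = S + A := by
    simp only [hSdef, hAdef, smul_add, smul_sub]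
    module
  have hST : Sᵀ = S := by
    simp [hSdef, Matrix.transpose_smul, Matrix.transpose_add, add_comm]
  have hAT : Aᵀ = -A := by
    simp only [hAdef, Matrix.transpose_smul, Matrix.transpose_sub, Matrix.transpose_transpose]
    rw [← smul_neg]
    congr 1
    abel
  have quadT : ∀ (M : Matrix (Fin n) (Fin n) ℚ) (x : Fin n → ℚ),
      x ⬝ᵥ Mᵀ.mulVec x = x ⬝ᵥ M.mulVec x := by
    intro M x
    rw [Matrix.dotProduct_mulVec, Matrix.vecMul_transpose, dotProduct_comm]
  have hAquad : ∀ x : Fin n → ℚ, x ⬝ᵥ A.mulVec x = 0 := by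
    intro x
    have h1 : x ⬝ᵥ A.mulVec x = x ⬝ᵥ (-A).mulVec x := by rw [← hAT, quadT]
    have h2 : x ⬝ᵥ (-A).mulVec x = -(x ⬝ᵥ A.mulVec x) := by
      rw [Matrix.neg_mulVec, dotProduct_neg]
    linarith [h1.trans h2]
  have hSquad : ∀ x : Fin n → ℚ, x ≠ 0 → 0 < x ⬝ᵥ S.mulVec x := by
    intro x hx
    have hGx := h x hx
    rw [hGSA, Matrix.add_mulVec, dotProduct_add, hAquad] at hGx
    linarith
  set f : ℚ →+* ℝ := Rat.castHom ℝ with hf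
  have hquad_cast : ∀ (M : Matrix (Fin n) (Fin n) ℚ) (q : Fin n → ℚ),
      ((⇑f ∘ q) ⬝ᵥ (M.map ⇑f).mulVec (⇑f ∘ q)) = f (q ⬝ᵥ M.mulVec q) := by
    intro M q
    rw [RingHom.map_dotProduct]
    congr 1
    funext i
    exact (RingHom.map_mulVec f M q i).symm
  set Sr := S.map ⇑f with hSr
  set Ar := A.map ⇑f with hAr
  -- Sr is positive semidefinite
  have hdense : Dense (Set.pi Set.univ fun _ : Fin n => Set.range ((↑) : ℚ → ℝ)) :=
    dense_pi Set.univ fun _ _ => Rat.denseRange_cast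
  have hSrquad_nonneg : ∀ x : Fin n → ℝ, 0 ≤ x ⬝ᵥ Sr.mulVec x := by
    have hcont : Continuous fun x : Fin n → ℝ => x ⬝ᵥ Sr.mulVec x :=
      continuous_id.dotProduct
        ((continuous_const : Continuous fun _ : Fin n → ℝ => Sr).matrix_mulVec continuous_id)
    have hcl : IsClosed {x : Fin n → ℝ | 0 ≤ x ⬝ᵥ Sr.mulVec x} :=
      isClosed_le continuous_const hcont
    have hsub : (Set.pi Set.univ fun _ : Fin n => Set.range ((↑) : ℚ → ℝ)) ⊆
        {x : Fin n → ℝ | 0 ≤ x ⬝ᵥ Sr.mulVec x} := by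
      rintro x hx
      choose q hq using fun i => hx i (Set.mem_univ i)
      have hxq : x = ⇑f ∘ q := by funext i; exact (hq i).symm
      rw [Set.mem_setOf_eq, hxq, hquad_cast]
      rcases eq_or_ne q 0 with rfl | hq0
      · simp
      · have := (hSquad q hq0).le
        show (0 : ℝ) ≤ ((q ⬝ᵥ S.mulVec q : ℚ) : ℝ)
        exact_mod_cast this
    intro x
    exact (hcl.closure_subset_iff.2 hsub) (hdense x)
  have hSrsym : Sr.IsHermitian := by
    have : Srᵀ = Sr := by
      rw [hSr, ← Matrix.transpose_map, hST]
    show Srᴴ = Sr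
    rw [Matrix.conjTranspose_eq_transpose_of_trivial]
    exact this
  have hSrpsd : Sr.PosSemidef := by
    refine Matrix.posSemidef_iff_dotProduct_mulVec.2 ⟨hSrsym, fun x => ?_⟩
    simpa using hSrquad_nonneg x
  have hdetS : S.det ≠ 0 := by
    intro h0
    obtain ⟨x, hx0, hx⟩ := Matrix.exists_mulVec_eq_zero_iff.2 h0
    have := hSquad x hx0
    rw [hx] at this
    simp at this
  have hdetSr : Sr.det ≠ 0 := by
    rw [hSr]
    have : (S.map ⇑f).det = f S.det := (RingHom.map_det f S).symm
    rw [this]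
    simpa using hdetS
  have hSrinj : Function.Injective Sr.mulVec :=
    Matrix.mulVec_injective_iff_isUnit.2 ((Matrix.isUnit_iff_isUnit_det Sr).2
      (isUnit_iff_ne_zero.2 hdetSr))
  have hSrposdef : Sr.PosDef := by
    obtain ⟨B, hB⟩ : ∃ B : Matrix (Fin n) (Fin n) ℝ, Sr = Bᴴ * B :=
      CStarAlgebra.nonneg_iff_eq_star_mul_self.mp hSrpsd.nonneg
    refine Matrix.posDef_iff_dotProduct_mulVec.2 ⟨hSrsym, fun x hx => ?_⟩
    have hBH : Bᴴ = Bᵀ := by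
      ext i j; simp [Matrix.conjTranspose_apply]
    have hquadB : x ⬝ᵥ Sr.mulVec x = (B.mulVec x) ⬝ᵥ (B.mulVec x) := by
      rw [hB, hBH, ← Matrix.mulVec_mulVec, Matrix.dotProduct_mulVec, Matrix.vecMul_transpose]
    have hBx : B.mulVec x ≠ 0 := by
      intro hBx0
      apply hx
      have hSx : Sr.mulVec x = 0 := by
        rw [hB, ← Matrix.mulVec_mulVec, hBx0, Matrix.mulVec_zero]
      have : Sr.mulVec x = Sr.mulVec 0 := by simpa using hSx
      exact hSrinj this
    have : 0 < (B.mulVec x) ⬝ᵥ (B.mulVec x) := by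
      have hnn : 0 ≤ (B.mulVec x) ⬝ᵥ (B.mulVec x) := by
        have : 0 ≤ ∑ i, (B.mulVec x) i * (B.mulVec x) i :=
          Finset.sum_nonneg fun i _ => mul_self_nonneg _
        simpa [dotProduct] using this
      rcases hnn.lt_or_eq with hlt | heq
      · exact hlt
      · exact absurd (dotProduct_self_eq_zero.1 heq.symm) hBx
    simpa [hquadB] using this
  -- IVT on t ↦ det (Sr + t • Ar)
  set F : ℝ → ℝ := fun t => (Sr + t • Ar).det with hF
  have hFcont : Continuous F := by
    apply Continuous.matrix_det
    apply Continuous.add continuous_const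
    exact continuous_id.smul continuous_const
  have hF0 : 0 < F 0 := by
    simpa [hF] using hSrposdef.det_pos
  have hFne : ∀ t : ℝ, F t ≠ 0 := by
    intro t h0
    obtain ⟨x, hx0, hx⟩ := Matrix.exists_mulVec_eq_zero_iff.2 h0
    have hq : x ⬝ᵥ (Sr + t • Ar).mulVec x = 0 := by rw [hx]; simp
    have hArquad : x ⬝ᵥ Ar.mulVec x = 0 := by
      have hArT : Arᵀ = -Ar := by
        rw [hAr, ← Matrix.transpose_map, hAT]
        ext i j; simp
      have h1 : x ⬝ᵥ Arᵀ.mulVec x = x ⬝ᵥ Ar.mulVec x := by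
        rw [Matrix.dotProduct_mulVec, Matrix.vecMul_transpose, dotProduct_comm]
      rw [hArT, Matrix.neg_mulVec, dotProduct_neg] at h1
      linarith
    rw [Matrix.add_mulVec, dotProduct_add, Matrix.smul_mulVec,
      dotProduct_smul, hArquad, smul_zero, add_zero] at hq
    exact ((Matrix.posDef_iff_dotProduct_mulVec.1 hSrposdef).2 hx0).ne' (by simpa using hq)
  have hF1 : 0 < F 1 := by
    by_contra hle
    push_neg at hle
    have h1lt : F 1 < 0 := lt_of_le_of_ne hle (hFne 1)
    have : (0 : ℝ) ∈ Set.Icc (F 1) (F 0) := ⟨h1lt.le, hF0.le⟩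
    obtain ⟨t, _, ht⟩ := intermediate_value_Icc' (by norm_num : (0:ℝ) ≤ 1)
      hFcont.continuousOn this
    exact hFne t ht
  -- conclude
  have hGr : (G.map ⇑f).det = F 1 := by
    have : Sr + (1:ℝ) • Ar = G.map ⇑f := by
      rw [one_smul, hSr, hAr, ← Matrix.map_add _ (fun a b => map_add f a b), ← hGSA]
    simp only [hF]
    rw [this]
  have hcast : ((G.det : ℚ) : ℝ) = (G.map ⇑f).det := by
    rw [← RingHom.mapMatrix_apply]
    exact RingHom.map_det f G
  have hfin : (0 : ℝ) < ((G.det : ℚ) : ℝ) := by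
    rw [hcast, hGr]; exact hF1
  exact_mod_cast hfin

open Matrix



/-- An order in a finite-dimensional `ℚ`-algebra. -/
def IsZOrder {D : Type*} [Ring D] [Algebra ℚ D] (S : Subring D) : Prop :=
  (AddSubgroup.toIntSubmodule S.toAddSubgroup).FG ∧
    Submodule.span ℚ (S : Set D) = ⊤

/-- `v` is a `ℤ`-basis of (the additive group of) the subring `S`. -/
def IsZBasisOf {D : Type*} [Ring D] {N : ℕ} (v : Fin N → D) (S : Subring D) : Prop :=
  LinearIndependent ℤ v ∧
    Submodule.span ℤ (Set.range v) = AddSubgroup.toIntSubmodule S.toAddSubgroup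

open Matrix

/-- Let `(D, †)` be a simple `ℚ`-algebra with positive involution of type IV:
`dim_F D = d²` over the centre `F` and `[F : ℚ] = 2e` (so `dim_ℚ D = 2d²e`), with
reduced trace `trd` satisfying `Tr_{D/ℚ} = d · trd` and positivity of
`a ↦ trd (a a†)`.  For an order `R` in `D` (whose elements have integral reduced
traces), `|disc(R)| = d^{2d²e} · covol(R)²`, where `covol(R)²` is the Gram
determinant of a `ℤ`-basis of `R` for the inner product `(a, b) ↦ Trd(a b†)`;
in particular `|disc(R)| ≥ d^{2d²e}`. -/
theorem stmt18 {D : Type*} [Ring D] [Algebra ℚ D] [FiniteDimensional ℚ D]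
    [StarRing D] (hsimple : IsSimpleRing D)
    (d e : ℕ) (hd : 0 < d) (he : 0 < e)
    (hcen : Module.finrank ℚ (Subalgebra.center ℚ D) = 2 * e)
    (hdim : Module.finrank ℚ D = 2 * d ^ 2 * e)
    (trd : D →ₗ[ℚ] ℚ)
    (htrd : ∀ x : D, LinearMap.trace ℚ D (LinearMap.mulLeft ℚ x) = d * trd x)
    (hpos : ∀ a : D, a ≠ 0 → 0 < trd (a * star a))
    (R : Subring D) (hR : IsZOrder R)
    (hint : ∀ a ∈ R, ∃ m : ℤ, trd a = (m : ℚ))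
    {N : ℕ} (v : Fin N → D) (hv : IsZBasisOf v R) :
    |(Matrix.of fun i j =>
        LinearMap.trace ℚ D (LinearMap.mulLeft ℚ (v i * v j))).det| =
      (d : ℚ) ^ (2 * d ^ 2 * e) *
        (Matrix.of fun i j => trd (v i * star (v j))).det ∧
    (d : ℚ) ^ (2 * d ^ 2 * e) ≤
      |(Matrix.of fun i j =>
          LinearMap.trace ℚ D (LinearMap.mulLeft ℚ (v i * v j))).det| := by
  classical
  obtain ⟨hli, hspan⟩ := hv
  obtain ⟨_, hRspan⟩ := hR
  -- v is a ℚ-basis of D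
  have hliQ : LinearIndependent ℚ v := (LinearIndependent.iff_fractionRing ℤ ℚ).1 hli
  have hmemR : ∀ i, v i ∈ R := by
    intro i
    have : v i ∈ Submodule.span ℤ (Set.range v) :=
      Submodule.subset_span ⟨i, rfl⟩
    rw [hspan] at this
    exact this
  have hspanQ : Submodule.span ℚ (Set.range v) = ⊤ := by
    rw [← top_le_iff, ← hRspan, Submodule.span_le]
    intro r hr
    have hrZ : r ∈ Submodule.span ℤ (Set.range v) := by
      rw [hspan]; exact hr
    have : Submodule.span ℤ (Set.range v) ≤
        (Submodule.span ℚ (Set.range v)).restrictScalars ℤ :=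
      Submodule.span_le.2 (fun x hx => Submodule.subset_span hx)
    exact this hrZ
  let b : Module.Basis (Fin N) ℚ D := Module.Basis.mk hliQ (by rw [hspanQ])
  have hb : ∀ i, b i = v i := fun i => Module.Basis.mk_apply hliQ _ i
  have hN : N = 2 * d ^ 2 * e := by
    have := Module.finrank_eq_card_basis b
    rw [hdim, Fintype.card_fin] at this
    omega
  -- matrices
  set T : Matrix (Fin N) (Fin N) ℚ := Matrix.of fun i j =>
    LinearMap.trace ℚ D (LinearMap.mulLeft ℚ (v i * v j)) with hTdef
  set trdT : Matrix (Fin N) (Fin N) ℚ := Matrix.of fun i j => trd (v i * v j) with htrdT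
  set G : Matrix (Fin N) (Fin N) ℚ := Matrix.of fun i j => trd (v i * star (v j)) with hGdef
  have hT : T = (d : ℚ) • trdT := by
    ext i j
    simp only [hTdef, htrdT, Matrix.smul_apply, Matrix.of_apply, smul_eq_mul]
    exact htrd (v i * v j)
  have hdetT : T.det = (d : ℚ) ^ N * trdT.det := by
    rw [hT, Matrix.det_smul, Fintype.card_fin]
  -- star as a matrix
  let st : D →ₗ[ℚ] D := (starLinearEquiv ℚ (A := D)).toLinearMap
  let M : Matrix (Fin N) (Fin N) ℚ := LinearMap.toMatrix b b st
  let C : Matrix (Fin N) (Fin N) ℚ := Mᵀ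
  have hCapp : ∀ j k, C j k = b.repr (star (v j)) k := by
    intro j k
    show (LinearMap.toMatrix b b st) k j = _
    rw [LinearMap.toMatrix_apply, hb j]
    rfl
  have hstarv : ∀ j, star (v j) = ∑ k, C j k • v k := by
    intro j
    have h0 := b.sum_repr (star (v j))
    rw [← h0]
    apply Finset.sum_congr rfl
    intro k _
    rw [hCapp j k, hb k]
  have hMM : M * M = 1 := by
    show LinearMap.toMatrix b b st * LinearMap.toMatrix b b st = 1
    rw [← LinearMap.toMatrix_comp b b b]
    have : st ∘ₗ st = LinearMap.id := by
      ext x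
      exact star_star x
    rw [this, LinearMap.toMatrix_id]
  have hCC : C * C = 1 := by
    show Mᵀ * Mᵀ = 1
    rw [← Matrix.transpose_mul, hMM, Matrix.transpose_one]
  have hdetC : C.det * C.det = 1 := by
    rw [← Matrix.det_mul, hCC, Matrix.det_one]
  -- G = trdT * Cᵀ
  have hG : G = trdT * Cᵀ := by
    ext i j
    rw [hGdef, Matrix.of_apply, hstarv j, Finset.mul_sum, map_sum]
    rw [Matrix.mul_apply]
    apply Finset.sum_congr rfl
    intro k _
    rw [mul_smul_comm, _root_.map_smul, smul_eq_mul, Matrix.transpose_apply]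
    show C j k * trd (v i * v k) = trdT i k * C j k
    rw [htrdT, Matrix.of_apply, mul_comm]
  have hdetG : G.det = trdT.det * C.det := by
    rw [hG, Matrix.det_mul, Matrix.det_transpose]
  -- positivity of G
  have hGquad : ∀ x : Fin N → ℚ, x ≠ 0 → 0 < x ⬝ᵥ G.mulVec x := by
    intro x hx
    set w : D := ∑ i, x i • v i with hw
    have hwne : w ≠ 0 := by
      intro h0
      apply hx
      funext i
      exact (Fintype.linearIndependent_iff.1 hliQ x (by rw [← hw, h0])) i
    have hsw : star w = ∑ j, x j • star (v j) := by
      rw [hw, star_sum]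
      apply Finset.sum_congr rfl
      intro j _
      rw [star_smul, star_trivial]
    have hws : w * star w = ∑ i, ∑ j, (x i * x j) • (v i * star (v j)) := by
      rw [hw, hsw, Finset.sum_mul]
      apply Finset.sum_congr rfl
      intro i _
      rw [Finset.mul_sum]
      apply Finset.sum_congr rfl
      intro j _
      rw [smul_mul_smul_comm]
    have htws : trd (w * star w) = ∑ i, ∑ j, (x i * x j) * G i j := by
      rw [hws, map_sum]
      apply Finset.sum_congr rfl
      intro i _
      rw [map_sum]
      apply Finset.sum_congr rfl
      intro j _
      rw [_root_.map_smul, smul_eq_mul, hGdef, Matrix.of_apply]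
    have hlhs : x ⬝ᵥ G.mulVec x = ∑ i, ∑ j, x i * (G i j * x j) := by
      simp [dotProduct, Matrix.mulVec, Finset.mul_sum]
    have hquad : x ⬝ᵥ G.mulVec x = trd (w * star w) := by
      rw [hlhs, htws]
      apply Finset.sum_congr rfl
      intro i _
      apply Finset.sum_congr rfl
      intro j _
      ring
    rw [hquad]
    exact hpos w hwne
  have hGpos : 0 < G.det := det_pos_of_quadform_pos G hGquad
  -- |trdT.det| = G.det
  have habs : |trdT.det| = G.det := by
    rcases mul_self_eq_one_iff.1 hdetC with h1 | h1
    · rw [hdetG, h1, mul_one]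
      rw [abs_of_pos]
      rw [hdetG, h1, mul_one] at hGpos
      exact hGpos
    · rw [hdetG, h1, mul_neg_one]
      rw [hdetG, h1, mul_neg_one] at hGpos
      rw [abs_of_neg (by linarith)]
  -- integrality: trdT.det is a nonzero integer
  have hint' : ∀ i j, ∃ m : ℤ, trd (v i * v j) = (m : ℚ) :=
    fun i j => hint _ (mul_mem (hmemR i) (hmemR j))
  choose m hm using hint'
  have htrdTm : trdT = (Matrix.of m).map ⇑(Int.castRingHom ℚ) := by
    ext i j
    simp [htrdT, hm i j]
  have htdet : trdT.det = ((Matrix.of m).det : ℚ) := by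
    rw [htrdTm, ← RingHom.mapMatrix_apply (Int.castRingHom ℚ), ← RingHom.map_det]
    rfl
  have htne : trdT.det ≠ 0 := by
    intro h0
    rw [h0] at habs
    simp at habs
    exact hGpos.ne' habs.symm
  have hone : (1 : ℚ) ≤ |trdT.det| := by
    rw [htdet]
    have hmne : (Matrix.of m).det ≠ 0 := by
      intro h0
      apply htne
      rw [htdet, h0, Int.cast_zero]
    have : (1 : ℤ) ≤ |(Matrix.of m).det| := Int.one_le_abs hmne
    calc (1:ℚ) ≤ (|(Matrix.of m).det| : ℤ) := by exact_mod_cast this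
      _ = |((Matrix.of m).det : ℚ)| := by push_cast; ring
  have hGone : (1 : ℚ) ≤ G.det := habs ▸ hone
  -- conclude
  have hdpow : (0 : ℚ) < (d : ℚ) ^ N := by positivity
  have hTabs : |T.det| = (d : ℚ) ^ N * G.det := by
    rw [hdetT, abs_mul, abs_of_pos hdpow, habs]
  constructor
  · rw [← hN]
    exact hTabs
  · rw [← hN, hTabs]
    nlinarith
end

section
/- Let (D, †) be a semisimple k-algebra with involution and V a left D-module. Then the map ψ ↦ Trd_{D/k} ∘ ψ is a bijection between the set of (D,†)-skew-Hermitian forms on V and the set of (D,†)-compatible skew-symmetric k-bilinear forms on V. -/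
section

variable {k : Type*} [Field k] {D : Type*} [Ring D] [Algebra k D] [StarRing D]
variable {V : Type*} [AddCommGroup V] [Module k V] [Module D V]

/-- A `(D, †)`-skew-Hermitian form on a left `D`-module `V`. -/
def IsSkewHermitianForm (ψ : V → V → D) : Prop :=
  (∀ x x' y, ψ (x + x') y = ψ x y + ψ x' y) ∧
  (∀ x y y', ψ x (y + y') = ψ x y + ψ x y') ∧
  (∀ (a b : D) (x y : V), ψ (a • x) (b • y) = a * ψ x y * star b) ∧
  (∀ x y, ψ y x = - star (ψ x y))

/-- A `(D, †)`-compatible skew-symmetric `k`-bilinear form on `V`. -/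
def IsCompatSkewSymmForm (φ : V → V → k) : Prop :=
  (∀ x x' y, φ (x + x') y = φ x y + φ x' y) ∧
  (∀ x y y', φ x (y + y') = φ x y + φ x y') ∧
  (∀ (c : k) (x y : V), φ (c • x) y = c * φ x y) ∧
  (∀ x y, φ y x = - φ x y) ∧
  (∀ (a : D) (x y : V), φ (a • x) y = φ x (star a • y))

end

/-!
Since the trace pairing `(d, c) ↦ Trd (d c)` on `D` is non-degenerate and `D` is finite-dimensional
over `k`, every `k`-linear functional on `D` is `c ↦ Trd (d c)` for a unique `d`. Given `φ`, the
functional `c ↦ φ (c x) y` therefore defines `ψ x y ∈ D`, and `ψ` is skew-Hermitian because `φ` is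
skew-symmetric and `(D, †)`-compatible. Conversely a skew-Hermitian `ψ` is recovered from
`Trd ∘ ψ` since `Trd (ψ x y · c) = Trd (ψ (c x) y)`.
-/

section TracePairing

variable {k D : Type*} [Field k] [Ring D] [Algebra k D] (trd : D →ₗ[k] k)

def traceForm : LinearMap.BilinForm k D := (LinearMap.mul k D).compr₂ trd

@[simp]
theorem traceForm_apply (d c : D) : traceForm trd d c = trd (d * c) := rfl

variable {trd}

theorem traceForm_separatingLeft (hnd : ∀ a : D, a ≠ 0 → ∃ b : D, trd (a * b) ≠ 0) :
    (traceForm trd).SeparatingLeft := by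
  intro d hd
  by_contra hne
  obtain ⟨b, hb⟩ := hnd d hne
  exact hb (hd b)

theorem eq_of_forall_trd_mul_eq (hnd : ∀ a : D, a ≠ 0 → ∃ b : D, trd (a * b) ≠ 0) {d d' : D}
    (h : ∀ c, trd (d * c) = trd (d' * c)) : d = d' := by
  rw [← sub_eq_zero]
  exact traceForm_separatingLeft hnd _ fun c => by simp [h c]

theorem exists_forall_trd_mul_eq [FiniteDimensional k D]
    (hnd : ∀ a : D, a ≠ 0 → ∃ b : D, trd (a * b) ≠ 0) (f : Module.Dual k D) :
    ∃ d : D, ∀ c, trd (d * c) = f c :=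
  have hB := LinearMap.BilinForm.Nondegenerate.ofSeparatingLeft (traceForm_separatingLeft hnd)
  ⟨((traceForm trd).toDual hB).symm f, LinearMap.BilinForm.apply_toDual_symm_apply (hB := hB) f⟩

end TracePairing

section Forms

variable {k D V : Type*} [Field k] [Ring D] [Algebra k D] [StarRing D] [AddCommGroup V] [Module D V]

namespace IsSkewHermitianForm

variable {ψ : V → V → D}

theorem map_smul_left (hψ : IsSkewHermitianForm ψ) (a : D) (x y : V) :
    ψ (a • x) y = a * ψ x y := by
  simpa using hψ.2.2.1 a 1 x y

theorem map_smul_right (hψ : IsSkewHermitianForm ψ) (b : D) (x y : V) :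
    ψ x (b • y) = ψ x y * star b := by
  simpa using hψ.2.2.1 1 b x y

theorem trd_mul_eq {trd : D →ₗ[k] k} (htrace : ∀ a b : D, trd (a * b) = trd (b * a))
    (hψ : IsSkewHermitianForm ψ) (x y : V) (c : D) :
    trd (ψ x y * c) = trd (ψ (c • x) y) := by
  rw [hψ.map_smul_left, htrace]

theorem isCompatSkewSymmForm_trd_comp [Module k V] [IsScalarTower k D V] {trd : D →ₗ[k] k}
    (htrace : ∀ a b : D, trd (a * b) = trd (b * a)) (hstar : ∀ a : D, trd (star a) = trd a)
    (hψ : IsSkewHermitianForm ψ) :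
    IsCompatSkewSymmForm (k := k) (D := D) fun x y => trd (ψ x y) := by
  refine ⟨fun x x' y => ?_, fun x y y' => ?_, fun c x y => ?_, fun x y => ?_, fun a x y => ?_⟩
  · simp only [hψ.1, map_add]
  · simp only [hψ.2.1, map_add]
  · show trd (ψ (c • x) y) = c * trd (ψ x y)
    rw [← algebraMap_smul D c x, hψ.map_smul_left, ← Algebra.smul_def, map_smul, smul_eq_mul]
  · simp only [hψ.2.2.2 x y, map_neg, hstar]
  · simp only [hψ.map_smul_left, hψ.map_smul_right, star_star, htrace a]

end IsSkewHermitianForm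

namespace IsCompatSkewSymmForm

variable [Module k V] {φ : V → V → k}

theorem exists_trd_mul_eq [FiniteDimensional k D] [IsScalarTower k D V] {trd : D →ₗ[k] k}
    (hnd : ∀ a : D, a ≠ 0 → ∃ b : D, trd (a * b) ≠ 0)
    (hφ : IsCompatSkewSymmForm (k := k) (D := D) φ) :
    ∃ ψ : V → V → D, ∀ x y c, trd (ψ x y * c) = φ (c • x) y := by
  obtain ⟨hadd_left, -, hsmul, -⟩ := hφ
  have (x y : V) : ∃ d : D, ∀ c, trd (d * c) = φ (c • x) y :=
    exists_forall_trd_mul_eq hnd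
      { toFun := fun c => φ (c • x) y
        map_add' := fun c c' => by simp only [add_smul, hadd_left]
        map_smul' := fun s c => by simp only [smul_assoc, hsmul, smul_eq_mul, RingHom.id_apply] }
  choose ψ hψ using this
  exact ⟨ψ, hψ⟩

theorem isSkewHermitianForm_of_trd_mul_eq {trd : D →ₗ[k] k}
    (htrace : ∀ a b : D, trd (a * b) = trd (b * a)) (hstar : ∀ a : D, trd (star a) = trd a)
    (hnd : ∀ a : D, a ≠ 0 → ∃ b : D, trd (a * b) ≠ 0)
    (hφ : IsCompatSkewSymmForm (k := k) (D := D) φ)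
    {ψ : V → V → D} (hψφ : ∀ x y c, trd (ψ x y * c) = φ (c • x) y) :
    IsSkewHermitianForm ψ := by
  obtain ⟨hadd_left, hadd_right, -, hskew, hcompat⟩ := hφ
  have hcompat' (b : D) (x y : V) : φ x (b • y) = φ (star b • x) y := by
    rw [hcompat, star_star]
  refine ⟨fun x x' y => ?_, fun x y y' => ?_, fun a b x y => ?_, fun x y => ?_⟩ <;>
    refine eq_of_forall_trd_mul_eq hnd fun c => ?_
  · rw [hψφ, smul_add, hadd_left, add_mul, map_add, hψφ, hψφ]
  · rw [hψφ, hadd_right, add_mul, map_add, hψφ, hψφ]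
  · calc trd (ψ (a • x) (b • y) * c)
        = φ ((star b * c * a) • x) y := by rw [hψφ, hcompat', smul_smul, smul_smul]
      _ = trd (a * ψ x y * star b * c) := by
        rw [← hψφ, ← mul_assoc, htrace]
        simp only [mul_assoc]
  · calc trd (ψ y x * c) = -φ (star c • x) y := by rw [hψφ, hskew, hcompat']
      _ = trd (-star (ψ x y) * c) := by
        rw [← hψφ, neg_mul, map_neg, ← hstar, star_mul, star_star, htrace]

end IsCompatSkewSymmForm

end Forms

theorem stmt19_general {k : Type*} [Field k] {D : Type*} [Ring D] [Algebra k D]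
    [StarRing D] [FiniteDimensional k D]
    {V : Type*} [AddCommGroup V] [Module k V] [Module D V] [IsScalarTower k D V]
    (trd : D →ₗ[k] k)
    (htrace : ∀ a b : D, trd (a * b) = trd (b * a))
    (hstar : ∀ a : D, trd (star a) = trd a)
    (hnd : ∀ a : D, a ≠ 0 → ∃ b : D, trd (a * b) ≠ 0) :
    (∀ ψ : V → V → D, IsSkewHermitianForm ψ →
      IsCompatSkewSymmForm (k := k) (D := D) fun x y => trd (ψ x y)) ∧
    (∀ φ : V → V → k, IsCompatSkewSymmForm (k := k) (D := D) φ →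
      ∃! ψ : V → V → D, IsSkewHermitianForm ψ ∧ ∀ x y, trd (ψ x y) = φ x y) := by
  refine ⟨fun ψ hψ => hψ.isCompatSkewSymmForm_trd_comp htrace hstar, fun φ hφ => ?_⟩
  obtain ⟨ψ, hψφ⟩ := hφ.exists_trd_mul_eq hnd
  refine ⟨ψ, ⟨hφ.isSkewHermitianForm_of_trd_mul_eq htrace hstar hnd hψφ,
    fun x y => by simpa using hψφ x y 1⟩, ?_⟩
  rintro ψ' ⟨hψ', hψ'φ⟩
  funext x y
  exact eq_of_forall_trd_mul_eq hnd fun c => by rw [hψ'.trd_mul_eq htrace, hψ'φ, hψφ]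

/-- Let `(D, †)` be a semisimple `k`-algebra with involution (with reduced trace
`trd`, a tracial `star`-invariant `k`-linear functional whose trace form is
non-degenerate) and `V` a left `D`-module.  Then `ψ ↦ Trd_{D/k} ∘ ψ` is a
bijection between `(D, †)`-skew-Hermitian forms on `V` and `(D, †)`-compatible
skew-symmetric forms on `V`. -/
theorem stmt19 {k : Type*} [Field k] {D : Type*} [Ring D] [Algebra k D]
    [StarRing D] [FiniteDimensional k D] [IsSemisimpleRing D]
    {V : Type*} [AddCommGroup V] [Module k V] [Module D V] [IsScalarTower k D V]
    (trd : D →ₗ[k] k)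
    (htrace : ∀ a b : D, trd (a * b) = trd (b * a))
    (hstar : ∀ a : D, trd (star a) = trd a)
    (hnd : ∀ a : D, a ≠ 0 → ∃ b : D, trd (a * b) ≠ 0) :
    (∀ ψ : V → V → D, IsSkewHermitianForm ψ →
      IsCompatSkewSymmForm (k := k) (D := D) fun x y => trd (ψ x y)) ∧
    (∀ φ : V → V → k, IsCompatSkewSymmForm (k := k) (D := D) φ →
      ∃! ψ : V → V → D, IsSkewHermitianForm ψ ∧ ∀ x y, trd (ψ x y) = φ x y) :=
  stmt19_general trd htrace hstar hnd
end
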